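/- arXiv:math/0703823 — 13 statements merged into one kernel-verified Lean document; each statement's English description precedes it below -/
import Mathlib

section
/- The equation G(γ) = α has exactly three real solutions: two positive roots γ1, γ2 and one negative root −γ3, with 0 < γ1 < η < γ2 and γ3 > 0. Precisely, there exist real numbers γ1, γ2, γ3 with 0 < γ1 < η < γ2 and γ3 > 0 such that G(γ1) = G(γ2) = G(−γ3) = α, and every real γ ≠ η with G(γ) = α equals γ1, γ2 or −γ3. -/
set_option maxHeartbeats 1000000

/-- A cubic with nonzero leading coefficient and three distinct roots has no other roots. -/
lemma cubic_aux (a b c d r1 r2 r3 x : ℝ) (ha : a ≠ 0)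
    (h12 : r1 ≠ r2) (h13 : r1 ≠ r3) (h23 : r2 ≠ r3)
    (h1 : a*r1^3+b*r1^2+c*r1+d = 0)
    (h2 : a*r2^3+b*r2^2+c*r2+d = 0)
    (h3 : a*r3^3+b*r3^2+c*r3+d = 0)
    (hx : a*x^3+b*x^2+c*x+d = 0) :
    x = r1 ∨ x = r2 ∨ x = r3 := by
  have key : a*((x-r1)*((x-r2)*(x-r3)))*((r1-r2)*(r1-r3)*(r2-r3)) = 0 := by
    linear_combination ((r1-r2)*(r1-r3)*(r2-r3))*hx - ((x-r2)*(x-r3)*(r2-r3))*h1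
      + ((x-r1)*(x-r3)*(r1-r3))*h2 - ((x-r1)*(x-r2)*(r1-r2))*h3
  have hD : ((r1-r2)*(r1-r3)*(r2-r3)) ≠ 0 := by
    apply mul_ne_zero (mul_ne_zero (sub_ne_zero.mpr h12) (sub_ne_zero.mpr h13))
      (sub_ne_zero.mpr h23)
  have hprod : (x-r1)*((x-r2)*(x-r3)) = 0 := by
    rcases mul_eq_zero.mp key with h | h
    · rcases mul_eq_zero.mp h with h' | h'
      · exact absurd h' ha
      · exact h'
    · exact absurd h hD
  rcases mul_eq_zero.mp hprod with h | h
  · left; linarith [sub_eq_zero.mp h]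
  · rcases mul_eq_zero.mp h with h' | h'
    · right; left; linarith [sub_eq_zero.mp h']
    · right; right; linarith [sub_eq_zero.mp h']

/-- The equation `G γ = α` has exactly three real solutions: two positive
roots `γ1, γ2` and one negative root `-γ3`, with `0 < γ1 < η < γ2` and `γ3 > 0`. -/
theorem stmt_0 (σ μ lam η α : ℝ) (hσ : 0 < σ) (hlam : 0 < lam) (hη : 0 < η) (hα : 0 < α)
    (G : ℝ → ℝ)
    (hG : ∀ γ : ℝ, γ ≠ η → G γ = 1 / 2 * σ ^ 2 * γ ^ 2 + μ * γ + lam * η / (η - γ) - lam) :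
    ∃ γ1 γ2 γ3 : ℝ, 0 < γ1 ∧ γ1 < η ∧ η < γ2 ∧ 0 < γ3 ∧
      G γ1 = α ∧ G γ2 = α ∧ G (-γ3) = α ∧
      ∀ γ : ℝ, γ ≠ η → G γ = α → γ = γ1 ∨ γ = γ2 ∨ γ = -γ3 := by
  have hσ2 : 0 < σ^2 := by positivity
  set P : ℝ → ℝ := fun γ => (σ^2/2*γ^2 + μ*γ - (lam+α))*(η-γ) + lam*η with hPdef
  have hPcont : Continuous P := by fun_prop
  have hGP : ∀ γ : ℝ, γ ≠ η → (G γ = α ↔ P γ = 0) := by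
    intro γ hγ
    have hne : η - γ ≠ 0 := sub_ne_zero.mpr (Ne.symm hγ)
    have hPγ : P γ = (G γ - α) * (η - γ) := by
      rw [hG γ hγ]
      field_simp [hPdef]
      ring
    constructor
    · intro h; rw [hPγ, h]; ring
    · intro h
      rw [hPγ] at h
      rcases mul_eq_zero.mp h with h' | h'
      · linarith [sub_eq_zero.mp h']
      · exact absurd h' hne
  have hP0 : P 0 = -(α*η) := by simp only [hPdef]; ring
  have hP0' : P 0 < 0 := by rw [hP0]; nlinarith
  have hPη : P η = lam*η := by simp only [hPdef]; ring
  have hPη' : 0 < P η := by rw [hPη]; positivity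
  -- large positive point
  set M : ℝ := max (η+1) (max 1 ((|μ|+(lam+α)+lam*η+1)*2/σ^2)) with hMdef
  have hM1 : η + 1 ≤ M := le_max_left _ _
  have hM2 : (1:ℝ) ≤ M := le_trans (le_max_left _ _) (le_max_right _ _)
  have hM3 : (|μ|+(lam+α)+lam*η+1)*2/σ^2 ≤ M := le_trans (le_max_right _ _) (le_max_right _ _)
  have hM3' : |μ|+(lam+α)+lam*η+1 ≤ σ^2/2*M := by
    rw [div_le_iff₀ hσ2] at hM3; nlinarith
  have hPM : P M < 0 := by
    have habs1 : μ ≤ |μ| := le_abs_self μ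
    have habs2 : -|μ| ≤ μ := neg_abs_le μ
    have hMη : M - η ≥ 1 := by linarith
    have hq : σ^2/2*M^2 + μ*M - (lam+α) ≥ lam*η + 1 := by nlinarith
    have : P M = -((σ^2/2*M^2 + μ*M - (lam+α))*(M-η)) + lam*η := by simp only [hPdef]; ring
    rw [this]
    nlinarith
  -- large negative point
  set N : ℝ := max 1 ((|μ|+(lam+α))*2/σ^2) with hNdef
  have hN1 : (1:ℝ) ≤ N := le_max_left _ _
  have hN2 : (|μ|+(lam+α))*2/σ^2 ≤ N := le_max_right _ _
  have hN2' : |μ|+(lam+α) ≤ σ^2/2*N := by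
    rw [div_le_iff₀ hσ2] at hN2; nlinarith
  have hPN : 0 < P (-N) := by
    have habs1 : μ ≤ |μ| := le_abs_self μ
    have habs2 : -|μ| ≤ μ := neg_abs_le μ
    have hq : σ^2/2*N^2 - μ*N - (lam+α) ≥ 0 := by nlinarith
    have : P (-N) = (σ^2/2*N^2 - μ*N - (lam+α))*(η+N) + lam*η := by simp only [hPdef]; ring
    rw [this]
    have : 0 < η + N := by linarith
    nlinarith
  -- root in (0, η)
  obtain ⟨γ1, hγ1mem, hγ1⟩ :=
    intermediate_value_Icc hη.le hPcont.continuousOn ⟨hP0'.le, hPη'.le⟩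
  have hγ1pos : 0 < γ1 := by
    rcases lt_or_eq_of_le hγ1mem.1 with h | h
    · exact h
    · exfalso; rw [← h] at hγ1; rw [hγ1] at hP0'; linarith
  have hγ1η : γ1 < η := by
    rcases lt_or_eq_of_le hγ1mem.2 with h | h
    · exact h
    · exfalso; rw [h] at hγ1; rw [hγ1] at hPη'; linarith
  -- root in (η, M]
  have hηM : η ≤ M := by linarith
  obtain ⟨γ2, hγ2mem, hγ2⟩ :=
    intermediate_value_Icc' hηM hPcont.continuousOn ⟨hPM.le, hPη'.le⟩
  have hγ2η : η < γ2 := by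
    rcases lt_or_eq_of_le hγ2mem.1 with h | h
    · exact h
    · exfalso; rw [← h] at hγ2; rw [hγ2] at hPη'; linarith
  -- root in [-N, 0)
  have hN0 : -N ≤ 0 := by linarith
  obtain ⟨γ3', hγ3mem, hγ3⟩ :=
    intermediate_value_Icc' hN0 hPcont.continuousOn ⟨hP0'.le, hPN.le⟩
  have hγ3neg : γ3' < 0 := by
    rcases lt_or_eq_of_le hγ3mem.2 with h | h
    · exact h
    · exfalso; rw [h] at hγ3; rw [hγ3] at hP0'; linarith
  refine ⟨γ1, γ2, -γ3', hγ1pos, hγ1η, hγ2η, by linarith, ?_, ?_, ?_, ?_⟩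
  · exact (hGP γ1 (ne_of_lt hγ1η)).mpr hγ1
  · exact (hGP γ2 (ne_of_gt hγ2η)).mpr hγ2
  · have : -(-γ3') = γ3' := by ring
    rw [this]
    exact (hGP γ3' (by linarith : γ3' ≠ η)).mpr hγ3
  · intro γ hγη hGγ
    have hPγ : P γ = 0 := (hGP γ hγη).mp hGγ
    have hcubic : ∀ y : ℝ, P y = 0 →
        (-(σ^2/2))*y^3 + (σ^2/2*η - μ)*y^2 + (μ*η + (lam+α))*y + (lam*η - (lam+α)*η) = 0 := by
      intro y hy
      simp only [hPdef] at hy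
      linear_combination hy
    have h1 := hcubic γ1 hγ1
    have h2 := hcubic γ2 hγ2
    have h3 := hcubic γ3' hγ3
    have hx := hcubic γ hPγ
    have ha : (-(σ^2/2)) ≠ 0 := by
      have h' : (0:ℝ) < σ^2/2 := by positivity
      exact neg_ne_zero.mpr (ne_of_gt h')
    have := cubic_aux (-(σ^2/2)) (σ^2/2*η - μ) (μ*η + (lam+α)) (lam*η - (lam+α)*η)
      γ1 γ2 γ3' γ ha (by linarith) (by linarith) (by linarith) h1 h2 h3 hx
    have hneg : -(-γ3') = γ3' := by ring
    rcases this with h | h | h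
    · exact Or.inl h
    · exact Or.inr (Or.inl h)
    · exact Or.inr (Or.inr (by rw [h]; ring))
end

section
/- If γ1, γ2, γ3 are real numbers with 0 < γ1 < η < γ2 and γ3 > 0 satisfying G(γ1) = G(γ2) = G(−γ3) = α, then γ1·γ2·γ3 = 2αη/σ², and moreover (−γ1γ2γ3 + η(−γ1γ2 + γ2γ3 + γ1γ3)) / (η·γ1·γ2·γ3) = (μ + λ/η)/α. -/
/-- If `γ1, γ2, γ3` with `0 < γ1 < η < γ2`, `γ3 > 0` satisfy
`G γ1 = G γ2 = G (-γ3) = α`, then `γ1·γ2·γ3 = 2αη/σ²` and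
`(-γ1γ2γ3 + η(-γ1γ2 + γ2γ3 + γ1γ3))/(η γ1 γ2 γ3) = (μ + λ/η)/α`. -/
theorem stmt_1 (σ μ lam η α : ℝ) (hσ : 0 < σ) (hlam : 0 < lam) (hη : 0 < η) (hα : 0 < α)
    (G : ℝ → ℝ)
    (hG : ∀ γ : ℝ, γ ≠ η → G γ = 1 / 2 * σ ^ 2 * γ ^ 2 + μ * γ + lam * η / (η - γ) - lam)
    (γ1 γ2 γ3 : ℝ) (h1 : 0 < γ1) (h2 : γ1 < η) (h3 : η < γ2) (h4 : 0 < γ3)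
    (e1 : G γ1 = α) (e2 : G γ2 = α) (e3 : G (-γ3) = α) :
    γ1 * γ2 * γ3 = 2 * α * η / σ ^ 2 ∧
      (-(γ1 * γ2 * γ3) + η * (-(γ1 * γ2) + γ2 * γ3 + γ1 * γ3)) / (η * γ1 * γ2 * γ3)
        = (μ + lam / η) / α := by
  set a : ℝ := σ ^ 2 / 2 with ha_def
  have ha : 0 < a := by positivity
  have d1 : η - γ1 ≠ 0 := by linarith
  have d2 : η - γ2 ≠ 0 := by linarith
  have d3 : η - (-γ3) ≠ 0 := by linarith
  have hh1 := (hG γ1 (by intro h; rw [h] at h2; linarith)).symm.trans e1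
  have hh2 := (hG γ2 (by intro h; rw [h] at h3; linarith)).symm.trans e2
  have hh3 := (hG (-γ3) (by intro h; linarith)).symm.trans e3
  field_simp at hh1 hh2 hh3
  -- cubic equations
  have hp1 : -a * γ1 ^ 3 + (a * η - μ) * γ1 ^ 2 + (μ * η + lam + α) * γ1 - α * η = 0 := by
    linear_combination hh1 / 2
  have hp2 : -a * γ2 ^ 3 + (a * η - μ) * γ2 ^ 2 + (μ * η + lam + α) * γ2 - α * η = 0 := by
    linear_combination hh2 / 2
  have hp3 : -a * (-γ3) ^ 3 + (a * η - μ) * (-γ3) ^ 2 + (μ * η + lam + α) * (-γ3) - α * η = 0 := by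
    linear_combination hh3 / 2
  have n12 : γ1 - γ2 ≠ 0 := sub_ne_zero.mpr (by intro h; rw [h] at h2; linarith)
  have n13 : γ1 + γ3 ≠ 0 := ne_of_gt (by linarith)
  have n23 : γ2 + γ3 ≠ 0 := ne_of_gt (by linarith)
  have q12 : -a * (γ1 ^ 2 + γ1 * γ2 + γ2 ^ 2) + (a * η - μ) * (γ1 + γ2) + (μ * η + lam + α) = 0 := by
    have key : (γ1 - γ2) * (-a * (γ1 ^ 2 + γ1 * γ2 + γ2 ^ 2) + (a * η - μ) * (γ1 + γ2) + (μ * η + lam + α)) = 0 := by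
      linear_combination hp1 - hp2
    rcases mul_eq_zero.mp key with h | h
    · exact absurd h n12
    · exact h
  have q13 : -a * (γ1 ^ 2 + γ1 * (-γ3) + (-γ3) ^ 2) + (a * η - μ) * (γ1 + -γ3) + (μ * η + lam + α) = 0 := by
    have key : (γ1 + γ3) * (-a * (γ1 ^ 2 + γ1 * (-γ3) + (-γ3) ^ 2) + (a * η - μ) * (γ1 + -γ3) + (μ * η + lam + α)) = 0 := by
      linear_combination hp1 - hp3
    rcases mul_eq_zero.mp key with h | h
    · exact absurd h n13
    · exact h
  have hs : a * (γ1 + γ2 - γ3) = a * η - μ := by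
    have key : (γ2 + γ3) * (a * (γ1 + γ2 - γ3) - (a * η - μ)) = 0 := by
      linear_combination q13 - q12
    rcases mul_eq_zero.mp key with h | h
    · exact absurd h n23
    · linear_combination h
  have he2 : a * (γ1 * γ2 - γ1 * γ3 - γ2 * γ3) + (μ * η + lam + α) = 0 := by
    linear_combination q12 + (γ1 + γ2) * hs
  have he3 : a * (γ1 * γ2 * γ3) = α * η := by
    linear_combination hp1 - γ1 * he2 + γ1 ^ 2 * hs
  have hσ2 : (σ : ℝ) ^ 2 ≠ 0 := by positivity
  have hg1 : γ1 * γ2 * γ3 = 2 * α * η / σ ^ 2 := by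
    rw [eq_div_iff hσ2]
    linear_combination 2 * he3
  refine ⟨hg1, ?_⟩
  have hγ2 : 0 < γ2 := lt_trans hη h3
  have hD : (0:ℝ) < η * γ1 * γ2 * γ3 :=
    mul_pos (mul_pos (mul_pos hη h1) hγ2) h4
  have hηne : (η : ℝ) ≠ 0 := ne_of_gt hη
  rw [div_eq_div_iff (ne_of_gt hD) (ne_of_gt hα)]
  rw [show μ + lam / η = (μ * η + lam) / η by field_simp]
  rw [div_mul_eq_mul_div, eq_comm, div_eq_iff hηne, eq_comm]
  linear_combination (-(η * (γ1 * γ2 * γ3))) * he2 +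
    (-(η * (-(γ1 * γ2) + γ2 * γ3 + γ1 * γ3))) * he3
end

section
/- For every b ∈ ℝ, the triple (A1(b), A2(b), A3(b)) is the unique solution (A1, A2, A3) ∈ ℝ³ of the linear system: (i) A1 e^{γ1 b} + A2 e^{γ2 b} + A3 e^{−γ3 b} = r b; (ii) (A1 η/(γ1−η)) e^{γ1 b} + (A2 η/(γ2−η)) e^{γ2 b} − (A3 η/(γ3+η)) e^{−γ3 b} + r(b + 1/η) = 0; (iii) γ1 A1 e^{γ1 b} + γ2 A2 e^{γ2 b} − γ3 A3 e^{−γ3 b} = r. -/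
/-! Writing `u = x e^{γ1 b}`, `v = y e^{γ2 b}`, `w = z e^{-γ3 b}` turns the system into a linear
system in `(u, v, w)` whose coefficients do not depend on `b`. Once the denominators of equation
(ii) are cleared, suitable combinations of the three equations isolate `u`, `v`, `w` with
coefficients `η²(γ3 + γ1)(γ2 - γ1)`, `η²(γ3 + γ2)(γ2 - γ1)`, `η²(γ3 + γ1)(γ3 + γ2)`, all nonzero;
undoing the substitution gives `A1`, `A2`, `A3`. -/

lemma eq_mul_exp_iff {x c a : ℝ} : x = c * Real.exp a ↔ x * Real.exp (-a) = c := by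
  rw [Real.exp_neg, ← div_eq_mul_inv, div_eq_iff (Real.exp_ne_zero a)]

lemma linear_system_iff {η γ1 γ2 γ3 r b u v w : ℝ} (hη : η ≠ 0) (h1 : γ1 - η ≠ 0)
    (h2 : γ2 - η ≠ 0) (h3 : γ3 + η ≠ 0) (h31 : γ3 + γ1 ≠ 0) (h32 : γ3 + γ2 ≠ 0)
    (h21 : γ2 - γ1 ≠ 0) :
    (u + v + w = r * b ∧
        u * η / (γ1 - η) + v * η / (γ2 - η) - w * η / (γ3 + η) + r * (b + 1 / η) = 0 ∧
        γ1 * u + γ2 * v - γ3 * w = r) ↔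
      (u = r / η ^ 2 *
          ((η - γ1) * (γ2 * γ3 * (η * b + 1) + η * (γ2 - γ3)) / ((γ3 + γ1) * (γ2 - γ1))) ∧
        v = r / η ^ 2 *
          ((γ2 - η) * (γ1 * γ3 * (η * b + 1) + η * (γ1 - γ3)) / ((γ3 + γ2) * (γ2 - γ1))) ∧
        w = r / η ^ 2 *
          ((η + γ3) * (γ1 * γ2 * (η * b + 1) - η * (γ1 + γ2)) / ((γ3 + γ1) * (γ3 + γ2)))) := by
  constructor
  · rintro ⟨e1, e2, e3⟩
    have e2_cleared : η ^ 2 * (γ2 - η) * (γ3 + η) * u + η ^ 2 * (γ1 - η) * (γ3 + η) * v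
        - η ^ 2 * (γ1 - η) * (γ2 - η) * w
        + r * (η * b + 1) * (γ1 - η) * (γ2 - η) * (γ3 + η) = 0 := by
      field_simp at e2
      linear_combination e2
    refine ⟨?_, ?_, ?_⟩ <;> field_simp
    · linear_combination e2_cleared + η ^ 2 * (γ1 - η) * (γ2 - η - γ3) * e1
        - η ^ 2 * (γ1 - η) * e3
    · linear_combination -e2_cleared - η ^ 2 * (γ2 - η) * (γ1 - η - γ3) * e1
        + η ^ 2 * (γ2 - η) * e3
    · linear_combination -e2_cleared + η ^ 2 * (γ3 + η) * (γ2 - η + γ1) * e1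
        - η ^ 2 * (γ3 + η) * e3
  · rintro ⟨rfl, rfl, rfl⟩
    refine ⟨?_, ?_, ?_⟩ <;> field_simp <;> ring

theorem stmt_3_general (η γ1 γ2 γ3 r : ℝ)
    (h1 : 0 < γ1) (h2 : γ1 < η) (h3 : η < γ2) (h4 : 0 < γ3)
    (A1 A2 A3 : ℝ → ℝ)
    (hA1 : ∀ b : ℝ, A1 b = r / η ^ 2 *
      ((η - γ1) * (γ2 * γ3 * (η * b + 1) + η * (γ2 - γ3)) / ((γ3 + γ1) * (γ2 - γ1))) *
      Real.exp (-γ1 * b))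
    (hA2 : ∀ b : ℝ, A2 b = r / η ^ 2 *
      ((γ2 - η) * (γ1 * γ3 * (η * b + 1) + η * (γ1 - γ3)) / ((γ3 + γ2) * (γ2 - γ1))) *
      Real.exp (-γ2 * b))
    (hA3 : ∀ b : ℝ, A3 b = r / η ^ 2 *
      ((η + γ3) * (γ1 * γ2 * (η * b + 1) - η * (γ1 + γ2)) / ((γ3 + γ1) * (γ2 + γ3))) *
      Real.exp (γ3 * b)) :
    ∀ b x y z : ℝ,
      (x * Real.exp (γ1 * b) + y * Real.exp (γ2 * b) + z * Real.exp (-γ3 * b) = r * b ∧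
        x * η / (γ1 - η) * Real.exp (γ1 * b) + y * η / (γ2 - η) * Real.exp (γ2 * b)
          - z * η / (γ3 + η) * Real.exp (-γ3 * b) + r * (b + 1 / η) = 0 ∧
        γ1 * x * Real.exp (γ1 * b) + γ2 * y * Real.exp (γ2 * b)
          - γ3 * z * Real.exp (-γ3 * b) = r)
      ↔ (x = A1 b ∧ y = A2 b ∧ z = A3 b) := by
  intro b x y z
  rw [hA1, hA2, hA3, eq_mul_exp_iff, eq_mul_exp_iff, eq_mul_exp_iff, add_comm γ2 γ3]
  simp only [neg_mul, neg_neg]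
  rw [← linear_system_iff (by linarith) (by linarith) (by linarith) (by linarith)
    (by linarith) (by linarith) (by linarith)]
  ring_nf

/-- For every `b`, `(A1 b, A2 b, A3 b)` is the unique solution of the
linear system (i)-(iii). -/
theorem stmt_3 (η γ1 γ2 γ3 r : ℝ)
    (h1 : 0 < γ1) (h2 : γ1 < η) (h3 : η < γ2) (h4 : 0 < γ3) (hr : 0 < r)
    (A1 A2 A3 : ℝ → ℝ)
    (hA1 : ∀ b : ℝ, A1 b = r / η ^ 2 *
      ((η - γ1) * (γ2 * γ3 * (η * b + 1) + η * (γ2 - γ3)) / ((γ3 + γ1) * (γ2 - γ1))) *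
      Real.exp (-γ1 * b))
    (hA2 : ∀ b : ℝ, A2 b = r / η ^ 2 *
      ((γ2 - η) * (γ1 * γ3 * (η * b + 1) + η * (γ1 - γ3)) / ((γ3 + γ2) * (γ2 - γ1))) *
      Real.exp (-γ2 * b))
    (hA3 : ∀ b : ℝ, A3 b = r / η ^ 2 *
      ((η + γ3) * (γ1 * γ2 * (η * b + 1) - η * (γ1 + γ2)) / ((γ3 + γ1) * (γ2 + γ3))) *
      Real.exp (γ3 * b)) :
    ∀ b x y z : ℝ,
      (x * Real.exp (γ1 * b) + y * Real.exp (γ2 * b) + z * Real.exp (-γ3 * b) = r * b ∧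
        x * η / (γ1 - η) * Real.exp (γ1 * b) + y * η / (γ2 - η) * Real.exp (γ2 * b)
          - z * η / (γ3 + η) * Real.exp (-γ3 * b) + r * (b + 1 / η) = 0 ∧
        γ1 * x * Real.exp (γ1 * b) + γ2 * y * Real.exp (γ2 * b)
          - γ3 * z * Real.exp (-γ3 * b) = r)
      ↔ (x = A1 b ∧ y = A2 b ∧ z = A3 b) :=
  stmt_3_general η γ1 γ2 γ3 r h1 h2 h3 h4 A1 A2 A3 hA1 hA2 hA3
end

section
/- For every a ∈ ℝ, the identity γ1 A1(a) e^{γ1 a} + γ2 A2(a) e^{γ2 a} − γ3 A3(a) e^{−γ3 a} = r holds; that is, with R(b) = γ1 A1(b) e^{γ1 a} + γ2 A2(b) e^{γ2 a} − γ3 A3(b) e^{−γ3 a}, one has R(a) = r. -/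
/-- For every `a`, `γ1 A1(a) e^{γ1 a} + γ2 A2(a) e^{γ2 a} - γ3 A3(a) e^{-γ3 a} = r`,
i.e. with `R b = γ1 A1(b) e^{γ1 a} + γ2 A2(b) e^{γ2 a} - γ3 A3(b) e^{-γ3 a}`, `R a = r`. -/
theorem stmt_4 (η γ1 γ2 γ3 r : ℝ)
    (h1 : 0 < γ1) (h2 : γ1 < η) (h3 : η < γ2) (h4 : 0 < γ3) (hr : 0 < r)
    (A1 A2 A3 : ℝ → ℝ)
    (hA1 : ∀ b : ℝ, A1 b = r / η ^ 2 *
      ((η - γ1) * (γ2 * γ3 * (η * b + 1) + η * (γ2 - γ3)) / ((γ3 + γ1) * (γ2 - γ1))) *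
      Real.exp (-γ1 * b))
    (hA2 : ∀ b : ℝ, A2 b = r / η ^ 2 *
      ((γ2 - η) * (γ1 * γ3 * (η * b + 1) + η * (γ1 - γ3)) / ((γ3 + γ2) * (γ2 - γ1))) *
      Real.exp (-γ2 * b))
    (hA3 : ∀ b : ℝ, A3 b = r / η ^ 2 *
      ((η + γ3) * (γ1 * γ2 * (η * b + 1) - η * (γ1 + γ2)) / ((γ3 + γ1) * (γ2 + γ3))) *
      Real.exp (γ3 * b)) :
    ∀ a : ℝ, γ1 * A1 a * Real.exp (γ1 * a) + γ2 * A2 a * Real.exp (γ2 * a)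
      - γ3 * A3 a * Real.exp (-γ3 * a) = r := by
  intro a
  have hη : (0:ℝ) < η := h1.trans h2
  have E1 : Real.exp (-γ1 * a) = (Real.exp (γ1 * a))⁻¹ := by
    rw [neg_mul, Real.exp_neg]
  have E2 : Real.exp (-γ2 * a) = (Real.exp (γ2 * a))⁻¹ := by
    rw [neg_mul, Real.exp_neg]
  have E3 : Real.exp (-γ3 * a) = (Real.exp (γ3 * a))⁻¹ := by
    rw [neg_mul, Real.exp_neg]
  rw [hA1, hA2, hA3, E1, E2, E3]
  have h31 : γ3 + γ1 ≠ 0 := by linarith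
  have h21 : γ2 - γ1 ≠ 0 := by nlinarith
  have h32 : γ3 + γ2 ≠ 0 := by linarith
  have h23 : γ2 + γ3 ≠ 0 := by linarith
  have hη0 : η ≠ 0 := ne_of_gt hη
  have x1 := Real.exp_ne_zero (γ1 * a)
  have x2 := Real.exp_ne_zero (γ2 * a)
  have x3 := Real.exp_ne_zero (γ3 * a)
  field_simp
  ring
end

section
/- Fix a ∈ ℝ and define R(b) = γ1 A1(b) e^{γ1 a} + γ2 A2(b) e^{γ2 a} − γ3 A3(b) e^{−γ3 a}. Then for every b ∈ ℝ, R′(b) = [γ1 C1 e^{−γ1(b−a)} + γ2 C2 e^{−γ2(b−a)} + γ3 C3 e^{γ3(b−a)}]·(−η γ1 γ2 γ3 b + Y), where C1 = (r/η²)(η−γ1)/((γ3+γ1)(γ2−γ1)) > 0, C2 = (r/η²)(γ2−η)/((γ3+γ2)(γ2−γ1)) > 0, C3 = (r/η²)(η+γ3)/((γ3+γ1)(γ3+γ2)) > 0 and Y = −γ1γ2γ3 + η(−γ1γ2 + γ2γ3 + γ1γ3). Consequently R is strictly increasing on (−∞, b*] and strictly decreasing on [b*, ∞), where b* = Y/(η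 γ1 γ2 γ3), and R(b) → −∞ as b → ∞. -/
/-!
Absorbing `a` into the exponentials, `R` is a combination of three terms
`(m b + p) e^{k (b - a)}`, whose derivatives are `(m + k (m b + p)) e^{k (b - a)}`. For each of
the three terms the linear factor `m + k (m b + p)` is, up to the sign of the term, the same
`-η γ1 γ2 γ3 b + Y`, so `R'` has the sign of this linear function. At `+∞` the two decaying
terms vanish while the third, with `m, k > 0`, enters with a minus sign and drives `R` to `-∞`.
-/

open Filter Real Set Topology

lemma hasDerivAt_linear_mul_exp (m p k a x : ℝ) :
    HasDerivAt (fun x => (m * x + p) * exp (k * (x - a)))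
      ((m + k * (m * x + p)) * exp (k * (x - a))) x := by
  have hlin : HasDerivAt (fun x => m * x + p) m x := by
    simpa using ((hasDerivAt_id x).const_mul m).add_const p
  have hexp : HasDerivAt (fun x => exp (k * (x - a))) (exp (k * (x - a)) * k) x := by
    simpa using (((hasDerivAt_id x).sub_const a).const_mul k).exp
  exact (hlin.mul hexp).congr_deriv (by ring)

lemma tendsto_linear_mul_exp_atTop_nhds_zero {k : ℝ} (hk : k < 0) (m p a : ℝ) :
    Tendsto (fun x => (m * x + p) * exp (k * (x - a))) atTop (𝓝 0) := by
  have hx : Tendsto (fun x : ℝ => x * exp (k * x)) atTop (𝓝 0) := by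
    simpa using tendsto_rpow_mul_exp_neg_mul_atTop_nhds_zero 1 (-k) (neg_pos.2 hk)
  have h1 : Tendsto (fun x : ℝ => exp (k * x)) atTop (𝓝 0) :=
    tendsto_exp_atBot.comp (tendsto_id.const_mul_atTop_of_neg hk)
  have := ((hx.const_mul m).add (h1.const_mul p)).const_mul (exp (-(k * a)))
  simp only [mul_zero, add_zero] at this
  refine this.congr fun x => ?_
  rw [mul_sub, sub_eq_add_neg, exp_add]
  ring

lemma tendsto_linear_mul_exp_atTop_atTop {m k : ℝ} (hm : 0 < m) (hk : 0 < k) (p a : ℝ) :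
    Tendsto (fun x => (m * x + p) * exp (k * (x - a))) atTop atTop :=
  (tendsto_atTop_add_const_right _ p (tendsto_id.const_mul_atTop hm)).atTop_mul_atTop₀
    (tendsto_exp_atTop.comp
      ((tendsto_atTop_add_const_right _ (-a) tendsto_id).const_mul_atTop hk))

lemma tendsto_linear_mul_exp_combination_atBot {k₁ k₂ k₃ m₃ w₃ : ℝ}
    (hk₁ : k₁ < 0) (hk₂ : k₂ < 0) (hk₃ : 0 < k₃) (hm₃ : 0 < m₃) (hw₃ : 0 < w₃)
    (w₁ w₂ m₁ m₂ p₁ p₂ p₃ a : ℝ) :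
    Tendsto (fun x => w₁ * ((m₁ * x + p₁) * exp (k₁ * (x - a)))
      + w₂ * ((m₂ * x + p₂) * exp (k₂ * (x - a)))
      - w₃ * ((m₃ * x + p₃) * exp (k₃ * (x - a)))) atTop atBot := by
  have hdecay := ((tendsto_linear_mul_exp_atTop_nhds_zero hk₁ m₁ p₁ a).const_mul w₁).add
    ((tendsto_linear_mul_exp_atTop_nhds_zero hk₂ m₂ p₂ a).const_mul w₂)
  have hgrow := (tendsto_linear_mul_exp_atTop_atTop hm₃ hk₃ p₃ a).const_mul_atTop hw₃
  simp only [mul_zero, add_zero] at hdecay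
  exact (hdecay.add_atBot (tendsto_neg_atTop_atBot.comp hgrow)).congr fun x =>
    (sub_eq_add_neg _ _).symm

section SignChange

variable {f g : ℝ → ℝ} {K Y : ℝ}

lemma strictMonoOn_Iic_of_hasDerivAt_mul_linear (hK : 0 < K) (hg : ∀ x, 0 < g x)
    (hf : ∀ x, HasDerivAt f (g x * (-(K * x) + Y)) x) : StrictMonoOn f (Iic (Y / K)) := by
  refine strictMonoOn_of_deriv_pos (convex_Iic _)
    (fun x _ => (hf x).continuousAt.continuousWithinAt) fun x hx => ?_
  rw [interior_Iic, mem_Iio, lt_div_iff₀ hK] at hx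
  rw [(hf x).deriv]
  exact mul_pos (hg x) (by linarith)

lemma strictAntiOn_Ici_of_hasDerivAt_mul_linear (hK : 0 < K) (hg : ∀ x, 0 < g x)
    (hf : ∀ x, HasDerivAt f (g x * (-(K * x) + Y)) x) : StrictAntiOn f (Ici (Y / K)) := by
  refine strictAntiOn_of_deriv_neg (convex_Ici _)
    (fun x _ => (hf x).continuousAt.continuousWithinAt) fun x hx => ?_
  rw [interior_Ici, mem_Ioi, div_lt_iff₀ hK] at hx
  rw [(hf x).deriv]
  exact mul_neg_of_pos_of_neg (hg x) (by linarith)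

end SignChange

/-- Derivative formula for `R`, positivity of `C1, C2, C3`, strict monotonicity
of `R` on `(-∞, b*]`, strict antitonicity on `[b*, ∞)`, and `R(b) → -∞` as `b → ∞`. -/
theorem stmt_5 (η γ1 γ2 γ3 r : ℝ)
    (h1 : 0 < γ1) (h2 : γ1 < η) (h3 : η < γ2) (h4 : 0 < γ3) (hr : 0 < r)
    (A1 A2 A3 : ℝ → ℝ)
    (hA1 : ∀ b : ℝ, A1 b = r / η ^ 2 *
      ((η - γ1) * (γ2 * γ3 * (η * b + 1) + η * (γ2 - γ3)) / ((γ3 + γ1) * (γ2 - γ1))) *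
      Real.exp (-γ1 * b))
    (hA2 : ∀ b : ℝ, A2 b = r / η ^ 2 *
      ((γ2 - η) * (γ1 * γ3 * (η * b + 1) + η * (γ1 - γ3)) / ((γ3 + γ2) * (γ2 - γ1))) *
      Real.exp (-γ2 * b))
    (hA3 : ∀ b : ℝ, A3 b = r / η ^ 2 *
      ((η + γ3) * (γ1 * γ2 * (η * b + 1) - η * (γ1 + γ2)) / ((γ3 + γ1) * (γ2 + γ3))) *
      Real.exp (γ3 * b))
    (a : ℝ) (R : ℝ → ℝ)
    (hR : ∀ b : ℝ, R b = γ1 * A1 b * Real.exp (γ1 * a) + γ2 * A2 b * Real.exp (γ2 * a)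
      - γ3 * A3 b * Real.exp (-γ3 * a))
    (C1 C2 C3 Y bstar : ℝ)
    (hC1 : C1 = r / η ^ 2 * ((η - γ1) / ((γ3 + γ1) * (γ2 - γ1))))
    (hC2 : C2 = r / η ^ 2 * ((γ2 - η) / ((γ3 + γ2) * (γ2 - γ1))))
    (hC3 : C3 = r / η ^ 2 * ((η + γ3) / ((γ3 + γ1) * (γ3 + γ2))))
    (hY : Y = -(γ1 * γ2 * γ3) + η * (-(γ1 * γ2) + γ2 * γ3 + γ1 * γ3))
    (hbstar : bstar = Y / (η * γ1 * γ2 * γ3)) :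
    0 < C1 ∧ 0 < C2 ∧ 0 < C3 ∧
    (∀ b : ℝ, HasDerivAt R
      ((γ1 * C1 * Real.exp (-γ1 * (b - a)) + γ2 * C2 * Real.exp (-γ2 * (b - a))
        + γ3 * C3 * Real.exp (γ3 * (b - a))) * (-(η * γ1 * γ2 * γ3 * b) + Y)) b) ∧
    StrictMonoOn R (Set.Iic bstar) ∧ StrictAntiOn R (Set.Ici bstar) ∧
    Filter.Tendsto R Filter.atTop Filter.atBot := by
  have hη : 0 < η := h1.trans h2
  have hγ2 : 0 < γ2 := hη.trans h3
  have hηγ1 := sub_pos.2 h2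
  have hγ2η := sub_pos.2 h3
  have hγ2γ1 := sub_pos.2 (h2.trans h3)
  have hC1pos : 0 < C1 := hC1 ▸ by positivity
  have hC2pos : 0 < C2 := hC2 ▸ by positivity
  have hC3pos : 0 < C3 := hC3 ▸ by positivity
  have hR' : R = fun b =>
      γ1 * C1 * ((η * γ2 * γ3 * b + (γ2 * γ3 + η * (γ2 - γ3))) * exp (-γ1 * (b - a)))
      + γ2 * C2 * ((η * γ1 * γ3 * b + (γ1 * γ3 + η * (γ1 - γ3))) * exp (-γ2 * (b - a)))
      - γ3 * C3 * ((η * γ1 * γ2 * b + (γ1 * γ2 - η * (γ1 + γ2)))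
        * exp (γ3 * (b - a))) := by
    funext b
    have hexp : ∀ k, exp (k * (b - a)) = exp (k * b) * exp (-k * a) := fun k => by
      rw [← exp_add]; ring_nf
    simp only [hR, hA1, hA2, hA3, hC1, hC2, hC3, hexp, neg_neg]
    ring
  have hderiv : ∀ b, HasDerivAt R
      ((γ1 * C1 * exp (-γ1 * (b - a)) + γ2 * C2 * exp (-γ2 * (b - a))
        + γ3 * C3 * exp (γ3 * (b - a))) * (-(η * γ1 * γ2 * γ3 * b) + Y)) b := by
    intro b
    rw [hR']
    refine ((((hasDerivAt_linear_mul_exp _ _ (-γ1) a b).const_mul (γ1 * C1)).add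
      ((hasDerivAt_linear_mul_exp _ _ (-γ2) a b).const_mul (γ2 * C2))).sub
      ((hasDerivAt_linear_mul_exp _ _ γ3 a b).const_mul (γ3 * C3))).congr_deriv ?_
    rw [hY]
    ring
  have hK : 0 < η * γ1 * γ2 * γ3 := by positivity
  have hg : ∀ b, 0 < γ1 * C1 * exp (-γ1 * (b - a)) + γ2 * C2 * exp (-γ2 * (b - a))
      + γ3 * C3 * exp (γ3 * (b - a)) := fun b => by positivity
  refine ⟨hC1pos, hC2pos, hC3pos, hderiv,
    hbstar ▸ strictMonoOn_Iic_of_hasDerivAt_mul_linear hK hg hderiv,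
    hbstar ▸ strictAntiOn_Ici_of_hasDerivAt_mul_linear hK hg hderiv, ?_⟩
  rw [hR']
  exact tendsto_linear_mul_exp_combination_atBot (neg_lt_zero.2 h1) (neg_lt_zero.2 hγ2) h4
    (by positivity) (by positivity) _ _ _ _ _ _ _ a
end

section
/- For every a ≥ 0 there exists a unique quadruple (A1, A2, A3, b) ∈ ℝ³ × (a, ∞) satisfying the four equations: (i) A1 e^{γ1 b} + A2 e^{γ2 b} + A3 e^{−γ3 b} = r b; (ii) (A1 η/(γ1−η)) e^{γ1 b} + (A2 η/(γ2−η)) e^{γ2 b} − (A3 η/(γ3+η)) e^{−γ3 b} + r(b + 1/η) = 0; (iii) γ1 A1 e^{γ1 a} + γ2 A2 e^{γ2 a} − γ3 A3 e^{−γ3 a} = 1; (iv) γ1 A1 e^{γ1 b} + γ2 A2 e^{γ2 b} − γ3 A3 e^{−γ3 b} = r. Moreover this solution satisfies b > max{a, b*} where b* = (−γ1γ2γ3 + η(−γ1γ2 + γ2γ3 + γ1γ3))/(η γ1 γ2 γ3), and A1 > 0, A2 > 0. -/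
/-!
Write `k = (γ₁, γ₂, -γ₃)` and `X_i = A_i e^{k_i b}`. Equations (i), (ii), (iv) form a nonsingular
linear system in `X` whose solution is affine in `b`: `X_i = P_i (b - b* + 1/k_i)`. Substituting it
into (iii) leaves the single equation `Φ(b) = 0` with `Φ(b) = Σ k_i X_i(b) e^{k_i (a - b)} - 1`.
Now `Φ(a) = r - 1 > 0`, `Φ'(b) = -(b - b*) Σ k_i² P_i e^{k_i (a - b)}` where every `P_i > 0` because
`γ₁ < η < γ₂`, and `Φ → -∞`. So `Φ` increases up to `b*` and then strictly decreases, and it has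
exactly one zero in `(a, ∞)`, lying beyond `max a b*`.
-/

open Real Filter Topology Set

theorem exists_unique_zero_of_unimodal {f : ℝ → ℝ} {a s : ℝ} (hf : Continuous f)
    (hmono : MonotoneOn f (Iic s)) (hanti : StrictAntiOn f (Ici s))
    (ha : 0 < f a) (htop : Tendsto f atTop atBot) :
    ∃ z, max a s < z ∧ f z = 0 ∧ ∀ y, a < y → f y = 0 → y = z := by
  have hpos : ∀ y, a ≤ y → y ≤ max a s → 0 < f y := by
    intro y hay hy
    rcases le_max_iff.1 hy with hya | hys
    · rwa [le_antisymm hya hay]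
    · exact ha.trans_le (hmono (hay.trans hys) hys hay)
  obtain ⟨B, hMB, hB⟩ := ((eventually_gt_atTop (max a s)).and
    (htop.eventually (eventually_lt_atBot 0))).exists
  obtain ⟨z, hz, hz0⟩ := intermediate_value_Ioo' hMB.le hf.continuousOn
    ⟨hB, hpos _ (le_max_left a s) le_rfl⟩
  refine ⟨z, hz.1, hz0, fun y hay hy0 => ?_⟩
  have hMy : max a s < y := not_le.1 fun hyM => (hpos y hay.le hyM).ne' hy0
  exact hanti.injOn (le_of_max_le_right hMy.le) (le_of_max_le_right hz.1.le) (hy0.trans hz0.symm)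

theorem exists_unique_zero_of_hasDerivAt {f q : ℝ → ℝ} {a s : ℝ}
    (hf : ∀ x, HasDerivAt f (-(x - s) * q x) x) (hq : ∀ x, 0 < q x)
    (ha : 0 < f a) (htop : Tendsto f atTop atBot) :
    ∃ z, max a s < z ∧ f z = 0 ∧ ∀ y, a < y → f y = 0 → y = z := by
  have hcont : Continuous f := continuous_iff_continuousAt.2 fun x => (hf x).continuousAt
  have hmono : StrictMonoOn f (Iic s) := by
    refine strictMonoOn_of_deriv_pos (convex_Iic s) hcont.continuousOn fun x hx => ?_
    rw [interior_Iic] at hx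
    rw [(hf x).deriv]
    exact mul_pos (neg_pos.2 (sub_neg.2 hx)) (hq x)
  have hanti : StrictAntiOn f (Ici s) := by
    refine strictAntiOn_of_deriv_neg (convex_Ici s) hcont.continuousOn fun x hx => ?_
    rw [interior_Ici] at hx
    rw [(hf x).deriv]
    exact mul_neg_of_neg_of_pos (neg_neg_of_pos (sub_pos.2 hx)) (hq x)
  exact exists_unique_zero_of_unimodal hcont hmono.monotoneOn hanti ha htop

theorem hasDerivAt_mul_sub_mul_exp (c t k a : ℝ) (hk : k ≠ 0) (x : ℝ) :
    HasDerivAt (fun y => c * (y - t) * exp (k * (a - y)))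
      (-(x - (t + 1 / k)) * (k * c * exp (k * (a - x)))) x := by
  have hlin : HasDerivAt (fun y => c * (y - t)) c x := by
    simpa using ((hasDerivAt_id x).sub_const t).const_mul c
  have hexp : HasDerivAt (fun y => exp (k * (a - y))) (exp (k * (a - x)) * -k) x := by
    simpa using (((hasDerivAt_id x).const_sub a).const_mul k).exp
  refine (hlin.mul hexp).congr_deriv ?_
  field_simp
  ring

theorem tendsto_mul_sub_mul_exp_zero (c t a : ℝ) {k : ℝ} (hk : 0 < k) :
    Tendsto (fun x => c * (x - t) * exp (k * (a - x))) atTop (𝓝 0) := by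
  have hy : Tendsto (fun x => k * (x - a)) atTop atTop :=
    (tendsto_atTop_add_const_right atTop (-a) tendsto_id).const_mul_atTop hk
  have hye : Tendsto (fun x => k * (x - a) * exp (-(k * (x - a)))) atTop (𝓝 0) := by
    simpa [Function.comp_def] using (tendsto_pow_mul_exp_neg_atTop_nhds_zero 1).comp hy
  have he : Tendsto (fun x => exp (-(k * (x - a)))) atTop (𝓝 0) :=
    tendsto_exp_atBot.comp (tendsto_neg_atTop_atBot.comp hy)
  convert (hye.const_mul (c / k)).add (he.const_mul (c * (a - t))) using 1
  · funext x
    rw [show k * (a - x) = -(k * (x - a)) by ring]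
    field_simp
    ring
  · simp

theorem tendsto_mul_sub_mul_exp_atBot (t a : ℝ) {c k : ℝ} (hc : c < 0) (hk : k < 0) :
    Tendsto (fun x => c * (x - t) * exp (k * (a - x))) atTop atBot := by
  have hlin : Tendsto (fun x => x - t) atTop atTop :=
    tendsto_atTop_add_const_right atTop (-t) tendsto_id
  have hexp : Tendsto (fun x => exp (k * (a - x))) atTop atTop := by
    refine tendsto_exp_atTop.comp (Tendsto.const_mul_atBot_of_neg hk (f := fun x => a - x) ?_)
    simpa only [sub_eq_add_neg] using tendsto_atBot_add_const_left atTop a tendsto_neg_atTop_atBot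
  simpa only [mul_assoc] using (hlin.atTop_mul_atTop₀ hexp).const_mul_atTop_of_neg hc

namespace FreeBoundary

noncomputable section

variable (η r : ℝ)

def EndConditions (k₁ k₂ k₃ X₁ X₂ X₃ b : ℝ) : Prop :=
  X₁ + X₂ + X₃ = r * b ∧
  X₁ * η / (k₁ - η) + X₂ * η / (k₂ - η) + X₃ * η / (k₃ - η) + r * (b + 1 / η) = 0 ∧
  k₁ * X₁ + k₂ * X₂ + k₃ * X₃ = r

-- Cramer's rule for `EndConditions`, a linear system in `X₁ X₂ X₃`.
def endCoeff (k k' k'' : ℝ) : ℝ := -(r / η) * (k - η) * k' * k'' / ((k - k') * (k - k''))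

def endAmplitude (k k' k'' b : ℝ) : ℝ := endCoeff η r k k' k'' * (b - (1 / k' + 1 / k'' - 1 / η))

def bStar (k₁ k₂ k₃ : ℝ) : ℝ := 1 / k₁ + 1 / k₂ + 1 / k₃ - 1 / η

def shooting (k₁ k₂ k₃ a b : ℝ) : ℝ :=
  k₁ * endAmplitude η r k₁ k₂ k₃ b * exp (k₁ * (a - b)) +
    k₂ * endAmplitude η r k₂ k₁ k₃ b * exp (k₂ * (a - b)) +
    k₃ * endAmplitude η r k₃ k₁ k₂ b * exp (k₃ * (a - b)) - 1

-- Equations (i)–(iv) with signed exponents: `k₃` stands for `-γ₃`.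
def IsSolution (k₁ k₂ k₃ a A₁ A₂ A₃ b : ℝ) : Prop :=
  a < b ∧
  EndConditions η r k₁ k₂ k₃ (A₁ * exp (k₁ * b)) (A₂ * exp (k₂ * b)) (A₃ * exp (k₃ * b)) b ∧
  k₁ * A₁ * exp (k₁ * a) + k₂ * A₂ * exp (k₂ * a) + k₃ * A₃ * exp (k₃ * a) = 1

end

variable {η r k₁ k₂ k₃ : ℝ}

theorem endConditions_endAmplitude (hk : [0, η, k₁, k₂, k₃].Nodup) (b : ℝ) :
    EndConditions η r k₁ k₂ k₃ (endAmplitude η r k₁ k₂ k₃ b) (endAmplitude η r k₂ k₁ k₃ b)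
      (endAmplitude η r k₃ k₁ k₂ b) b := by
  obtain ⟨⟨hη, h₁, h₂, h₃⟩, ⟨h₁η, h₂η, h₃η⟩, ⟨h₁₂, h₁₃⟩, h₂₃⟩ := by simpa using hk
  simp only [EndConditions, endAmplitude, endCoeff]
  refine ⟨?_, ?_, ?_⟩ <;> field_simp <;> ring

theorem eq_zero_of_endConditions_zero {D₁ D₂ D₃ : ℝ} (hη : η ≠ 0) (h₁₂ : k₁ ≠ k₂) (h₁₃ : k₁ ≠ k₃)
    (h₂₃ : k₂ ≠ k₃) (h₁η : k₁ ≠ η) (h₂η : k₂ ≠ η) (h₃η : k₃ ≠ η)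
    (e₁ : D₁ + D₂ + D₃ = 0)
    (e₂ : D₁ * η / (k₁ - η) + D₂ * η / (k₂ - η) + D₃ * η / (k₃ - η) = 0)
    (e₃ : k₁ * D₁ + k₂ * D₂ + k₃ * D₃ = 0) :
    D₁ = 0 ∧ D₂ = 0 ∧ D₃ = 0 := by
  have e₂' : (k₂ - η) * (k₃ - η) * D₁ + (k₁ - η) * (k₃ - η) * D₂
      + (k₁ - η) * (k₂ - η) * D₃ = 0 := by
    have h : η * ((k₂ - η) * (k₃ - η) * D₁ + (k₁ - η) * (k₃ - η) * D₂
        + (k₁ - η) * (k₂ - η) * D₃) = (k₁ - η) * (k₂ - η) * (k₃ - η)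
          * (D₁ * η / (k₁ - η) + D₂ * η / (k₂ - η) + D₃ * η / (k₃ - η)) := by
      field_simp
    rw [e₂, mul_zero] at h
    exact (mul_eq_zero.1 h).resolve_left hη
  -- Cramer's rule: the coefficients are the cofactors of the first column
  have hD₁ : D₁ * ((k₁ - k₂) * (k₁ - k₃) * (k₂ - k₃)) = 0 := by
    linear_combination ((k₁ - η) * (k₃ - η) * k₃ - (k₁ - η) * (k₂ - η) * k₂) * e₁
      + (k₂ - k₃) * e₂' + ((k₁ - η) * (k₂ - η) - (k₁ - η) * (k₃ - η)) * e₃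
  have hV : (k₁ - k₂) * (k₁ - k₃) * (k₂ - k₃) ≠ 0 := by
    simp [sub_eq_zero, h₁₂, h₁₃, h₂₃]
  have hD₁ : D₁ = 0 := (mul_eq_zero.1 hD₁).resolve_right hV
  have hD₂ : (k₂ - k₃) * D₂ = 0 := by linear_combination e₃ - k₃ * e₁ - (k₁ - k₃) * hD₁
  have hD₂ : D₂ = 0 := (mul_eq_zero.1 hD₂).resolve_left (sub_ne_zero.2 h₂₃)
  exact ⟨hD₁, hD₂, by linear_combination e₁ - hD₁ - hD₂⟩

theorem endConditions_iff (hk : [0, η, k₁, k₂, k₃].Nodup) {X₁ X₂ X₃ b : ℝ} :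
    EndConditions η r k₁ k₂ k₃ X₁ X₂ X₃ b ↔ X₁ = endAmplitude η r k₁ k₂ k₃ b ∧
      X₂ = endAmplitude η r k₂ k₁ k₃ b ∧ X₃ = endAmplitude η r k₃ k₁ k₂ b := by
  constructor
  · rintro ⟨e₁, e₂, e₃⟩
    obtain ⟨f₁, f₂, f₃⟩ := endConditions_endAmplitude (r := r) hk b
    obtain ⟨⟨hη, -⟩, ⟨h₁η, h₂η, h₃η⟩, ⟨h₁₂, h₁₃⟩, h₂₃⟩ := by simpa using hk
    simp only [← sub_eq_zero (a := X₁), ← sub_eq_zero (a := X₂), ← sub_eq_zero (a := X₃)]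
    refine eq_zero_of_endConditions_zero (Ne.symm hη) h₁₂ h₁₃ h₂₃ (Ne.symm h₁η) (Ne.symm h₂η)
      (Ne.symm h₃η) (by linear_combination e₁ - f₁) ?_ (by linear_combination e₃ - f₃)
    rw [sub_mul, sub_mul, sub_mul, sub_div, sub_div, sub_div]
    linear_combination e₂ - f₂
  · rintro ⟨rfl, rfl, rfl⟩
    exact endConditions_endAmplitude hk b

theorem shooting_eq_of_amplitudes {a b A₁ A₂ A₃ : ℝ}
    (e₁ : A₁ * exp (k₁ * b) = endAmplitude η r k₁ k₂ k₃ b)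
    (e₂ : A₂ * exp (k₂ * b) = endAmplitude η r k₂ k₁ k₃ b)
    (e₃ : A₃ * exp (k₃ * b) = endAmplitude η r k₃ k₁ k₂ b) :
    shooting η r k₁ k₂ k₃ a b =
      k₁ * A₁ * exp (k₁ * a) + k₂ * A₂ * exp (k₂ * a) + k₃ * A₃ * exp (k₃ * a) - 1 := by
  have shift : ∀ k : ℝ, exp (k * b) * exp (k * (a - b)) = exp (k * a) := fun k => by
    rw [← exp_add]; ring_nf
  simp only [shooting, ← e₁, ← e₂, ← e₃]
  linear_combination k₁ * A₁ * shift k₁ + k₂ * A₂ * shift k₂ + k₃ * A₃ * shift k₃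

theorem isSolution_iff (hk : [0, η, k₁, k₂, k₃].Nodup) {a A₁ A₂ A₃ b : ℝ} :
    IsSolution η r k₁ k₂ k₃ a A₁ A₂ A₃ b ↔ a < b ∧ shooting η r k₁ k₂ k₃ a b = 0 ∧
      A₁ * exp (k₁ * b) = endAmplitude η r k₁ k₂ k₃ b ∧
      A₂ * exp (k₂ * b) = endAmplitude η r k₂ k₁ k₃ b ∧
      A₃ * exp (k₃ * b) = endAmplitude η r k₃ k₁ k₂ b := by
  rw [IsSolution, endConditions_iff hk]
  constructor
  · rintro ⟨hab, ⟨e₁, e₂, e₃⟩, h⟩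
    exact ⟨hab, by rw [shooting_eq_of_amplitudes e₁ e₂ e₃, h, sub_self], e₁, e₂, e₃⟩
  · rintro ⟨hab, h, e₁, e₂, e₃⟩
    rw [shooting_eq_of_amplitudes e₁ e₂ e₃, sub_eq_zero] at h
    exact ⟨hab, ⟨e₁, e₂, e₃⟩, h⟩

theorem shooting_self (hk : [0, η, k₁, k₂, k₃].Nodup) (a : ℝ) :
    shooting η r k₁ k₂ k₃ a a = r - 1 := by
  obtain ⟨-, -, h⟩ := endConditions_endAmplitude (r := r) hk a
  simp only [shooting, sub_self, mul_zero, exp_zero, mul_one]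
  linarith

theorem shooting_eq (a : ℝ) : shooting η r k₁ k₂ k₃ a = fun x =>
    k₁ * endCoeff η r k₁ k₂ k₃ * (x - (1 / k₂ + 1 / k₃ - 1 / η)) * exp (k₁ * (a - x)) +
      k₂ * endCoeff η r k₂ k₁ k₃ * (x - (1 / k₁ + 1 / k₃ - 1 / η)) * exp (k₂ * (a - x)) +
      k₃ * endCoeff η r k₃ k₁ k₂ * (x - (1 / k₁ + 1 / k₂ - 1 / η)) * exp (k₃ * (a - x)) - 1 := by
  funext x
  simp only [shooting, endAmplitude]
  ring

theorem hasDerivAt_shooting (h₁ : k₁ ≠ 0) (h₂ : k₂ ≠ 0) (h₃ : k₃ ≠ 0) (a x : ℝ) :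
    HasDerivAt (shooting η r k₁ k₂ k₃ a) (-(x - bStar η k₁ k₂ k₃) *
      (k₁ ^ 2 * endCoeff η r k₁ k₂ k₃ * exp (k₁ * (a - x)) +
        k₂ ^ 2 * endCoeff η r k₂ k₁ k₃ * exp (k₂ * (a - x)) +
        k₃ ^ 2 * endCoeff η r k₃ k₁ k₂ * exp (k₃ * (a - x)))) x := by
  rw [shooting_eq]
  refine ((((hasDerivAt_mul_sub_mul_exp _ _ _ a h₁ x).add
    (hasDerivAt_mul_sub_mul_exp _ _ _ a h₂ x)).add
    (hasDerivAt_mul_sub_mul_exp _ _ _ a h₃ x)).sub_const 1).congr_deriv ?_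
  simp only [bStar]
  ring

theorem nodup_of_lt (h₁ : 0 < k₁) (h₁η : k₁ < η) (hη₂ : η < k₂) (h₃ : k₃ < 0) :
    [0, η, k₁, k₂, k₃].Nodup := by
  simp only [List.nodup_cons, List.mem_cons, List.not_mem_nil, List.nodup_nil, or_false,
    not_or, not_false_eq_true, and_true]
  refine ⟨⟨?_, ?_, ?_, ?_⟩, ⟨?_, ?_, ?_⟩, ⟨?_, ?_⟩, ?_⟩ <;> intro h <;> linarith

theorem endCoeff_pos (hr : 0 < r) (h₁ : 0 < k₁) (h₁η : k₁ < η) (hη₂ : η < k₂) (h₃ : k₃ < 0) :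
    0 < endCoeff η r k₁ k₂ k₃ ∧ 0 < endCoeff η r k₂ k₁ k₃ ∧ 0 < endCoeff η r k₃ k₁ k₂ := by
  have hη : 0 < η := h₁.trans h₁η
  have hrη : 0 < r / η := div_pos hr hη
  have hk₂ : 0 < k₂ := hη.trans hη₂
  simp only [endCoeff]
  refine ⟨div_pos_of_neg_of_neg ?_ ?_, div_pos ?_ ?_, div_pos ?_ ?_⟩
  · exact mul_neg_of_pos_of_neg (mul_pos (mul_pos_of_neg_of_neg (neg_neg_of_pos hrη)
      (sub_neg.2 h₁η)) hk₂) h₃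
  · exact mul_neg_of_neg_of_pos (sub_neg.2 (h₁η.trans hη₂)) (sub_pos.2 (h₃.trans h₁))
  · exact mul_pos_of_neg_of_neg (mul_neg_of_neg_of_pos (mul_neg_of_neg_of_pos
      (neg_neg_of_pos hrη) (sub_pos.2 hη₂)) h₁) h₃
  · exact mul_pos (sub_pos.2 (h₁η.trans hη₂)) (sub_pos.2 (h₃.trans hk₂))
  · exact mul_pos (mul_pos (mul_pos_of_neg_of_neg (neg_neg_of_pos hrη)
      (sub_neg.2 (h₃.trans hη))) h₁) hk₂
  · exact mul_pos_of_neg_of_neg (sub_neg.2 (h₃.trans h₁)) (sub_neg.2 (h₃.trans hk₂))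

theorem tendsto_shooting_atTop (hr : 0 < r) (h₁ : 0 < k₁) (h₁η : k₁ < η) (hη₂ : η < k₂)
    (h₃ : k₃ < 0) (a : ℝ) : Tendsto (shooting η r k₁ k₂ k₃ a) atTop atBot := by
  obtain ⟨-, -, hc₃⟩ := endCoeff_pos hr h₁ h₁η hη₂ h₃
  rw [shooting_eq]
  exact tendsto_atBot_add_const_right _ (-1) <| ((tendsto_mul_sub_mul_exp_zero _ _ a h₁).add
    (tendsto_mul_sub_mul_exp_zero _ _ a ((h₁.trans h₁η).trans hη₂))).add_atBot
    (tendsto_mul_sub_mul_exp_atBot _ a (mul_neg_of_neg_of_pos h₃ hc₃) h₃)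

theorem exists_unique_shooting_zero (hr : 1 < r) (h₁ : 0 < k₁) (h₁η : k₁ < η) (hη₂ : η < k₂)
    (h₃ : k₃ < 0) (a : ℝ) :
    ∃ z, max a (bStar η k₁ k₂ k₃) < z ∧ shooting η r k₁ k₂ k₃ a z = 0 ∧
      ∀ y, a < y → shooting η r k₁ k₂ k₃ a y = 0 → y = z := by
  have hr₀ : 0 < r := zero_lt_one.trans hr
  have hk₂ : 0 < k₂ := (h₁.trans h₁η).trans hη₂
  obtain ⟨hc₁, hc₂, hc₃⟩ := endCoeff_pos hr₀ h₁ h₁η hη₂ h₃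
  refine exists_unique_zero_of_hasDerivAt (hasDerivAt_shooting h₁.ne' hk₂.ne' h₃.ne a)
    (fun x => ?_) ?_ (tendsto_shooting_atTop hr₀ h₁ h₁η hη₂ h₃ a)
  · have term : ∀ {k c : ℝ}, k ≠ 0 → 0 < c → 0 < k ^ 2 * c * exp (k * (a - x)) :=
      fun hk hc => mul_pos (mul_pos (pow_two_pos_of_ne_zero hk) hc) (exp_pos _)
    exact add_pos (add_pos (term h₁.ne' hc₁) (term hk₂.ne' hc₂)) (term h₃.ne hc₃)
  · rw [shooting_self (nodup_of_lt h₁ h₁η hη₂ h₃)]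
    linarith

theorem endAmplitude_pos {k k' k'' b : ℝ} (hc : 0 < endCoeff η r k k' k'') (hk : 0 < k)
    (hb : 1 / k + 1 / k' + 1 / k'' - 1 / η < b) : 0 < endAmplitude η r k k' k'' b := by
  have : 0 < 1 / k := one_div_pos.2 hk
  exact mul_pos hc (by linarith)

theorem existsUnique_isSolution (hr : 1 < r) (h₁ : 0 < k₁) (h₁η : k₁ < η) (hη₂ : η < k₂)
    (h₃ : k₃ < 0) (a : ℝ) :
    ∃ A₁ A₂ A₃ b, IsSolution η r k₁ k₂ k₃ a A₁ A₂ A₃ b ∧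
      (∀ A₁' A₂' A₃' b', IsSolution η r k₁ k₂ k₃ a A₁' A₂' A₃' b' →
        A₁' = A₁ ∧ A₂' = A₂ ∧ A₃' = A₃ ∧ b' = b) ∧
      max a (bStar η k₁ k₂ k₃) < b ∧ 0 < A₁ ∧ 0 < A₂ := by
  have hk := nodup_of_lt h₁ h₁η hη₂ h₃
  obtain ⟨b, hb, hzero, huniq⟩ := exists_unique_shooting_zero hr h₁ h₁η hη₂ h₃ a
  have cancel : ∀ k X : ℝ, X * exp (-(k * b)) * exp (k * b) = X := fun k X => by
    rw [mul_assoc, ← exp_add, neg_add_cancel, exp_zero, mul_one]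
  refine ⟨endAmplitude η r k₁ k₂ k₃ b * exp (-(k₁ * b)),
    endAmplitude η r k₂ k₁ k₃ b * exp (-(k₂ * b)), endAmplitude η r k₃ k₁ k₂ b * exp (-(k₃ * b)),
    b, (isSolution_iff hk).2 ⟨(le_max_left _ _).trans_lt hb, hzero, cancel _ _, cancel _ _,
      cancel _ _⟩, fun A₁' A₂' A₃' b' h' => ?_, hb, ?_⟩
  · obtain ⟨hab', hzero', e₁, e₂, e₃⟩ := (isSolution_iff hk).1 h'
    obtain rfl := huniq b' hab' hzero'
    exact ⟨mul_right_cancel₀ (exp_pos (k₁ * b')).ne' (by rw [e₁, cancel]),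
      mul_right_cancel₀ (exp_pos (k₂ * b')).ne' (by rw [e₂, cancel]),
      mul_right_cancel₀ (exp_pos (k₃ * b')).ne' (by rw [e₃, cancel]), rfl⟩
  · obtain ⟨hc₁, hc₂, -⟩ := endCoeff_pos (zero_lt_one.trans hr) h₁ h₁η hη₂ h₃
    have hb : bStar η k₁ k₂ k₃ < b := (le_max_right _ _).trans_lt hb
    rw [bStar] at hb
    exact ⟨mul_pos (endAmplitude_pos hc₁ h₁ hb) (exp_pos _),
      mul_pos (endAmplitude_pos hc₂ ((h₁.trans h₁η).trans hη₂) (by linarith)) (exp_pos _)⟩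

end FreeBoundary

/-- For every `a ≥ 0` there is a unique quadruple `(A1, A2, A3, b)` with `b > a`
solving (i)-(iv); moreover `b > max {a, b*}`, `A1 > 0` and `A2 > 0`. -/
theorem stmt_6 (η γ1 γ2 γ3 r : ℝ)
    (h1 : 0 < γ1) (h2 : γ1 < η) (h3 : η < γ2) (h4 : 0 < γ3) (hr : 1 < r)
    (bstar : ℝ)
    (hbstar : bstar = (-(γ1 * γ2 * γ3) + η * (-(γ1 * γ2) + γ2 * γ3 + γ1 * γ3))
      / (η * γ1 * γ2 * γ3)) :
    ∀ a : ℝ, 0 ≤ a →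
      ∃ A1 A2 A3 b : ℝ,
        (a < b ∧
          A1 * Real.exp (γ1 * b) + A2 * Real.exp (γ2 * b) + A3 * Real.exp (-γ3 * b) = r * b ∧
          A1 * η / (γ1 - η) * Real.exp (γ1 * b) + A2 * η / (γ2 - η) * Real.exp (γ2 * b)
            - A3 * η / (γ3 + η) * Real.exp (-γ3 * b) + r * (b + 1 / η) = 0 ∧
          γ1 * A1 * Real.exp (γ1 * a) + γ2 * A2 * Real.exp (γ2 * a)
            - γ3 * A3 * Real.exp (-γ3 * a) = 1 ∧
          γ1 * A1 * Real.exp (γ1 * b) + γ2 * A2 * Real.exp (γ2 * b)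
            - γ3 * A3 * Real.exp (-γ3 * b) = r) ∧
        (∀ A1' A2' A3' b' : ℝ,
          (a < b' ∧
            A1' * Real.exp (γ1 * b') + A2' * Real.exp (γ2 * b') + A3' * Real.exp (-γ3 * b')
              = r * b' ∧
            A1' * η / (γ1 - η) * Real.exp (γ1 * b') + A2' * η / (γ2 - η) * Real.exp (γ2 * b')
              - A3' * η / (γ3 + η) * Real.exp (-γ3 * b') + r * (b' + 1 / η) = 0 ∧
            γ1 * A1' * Real.exp (γ1 * a) + γ2 * A2' * Real.exp (γ2 * a)
              - γ3 * A3' * Real.exp (-γ3 * a) = 1 ∧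
            γ1 * A1' * Real.exp (γ1 * b') + γ2 * A2' * Real.exp (γ2 * b')
              - γ3 * A3' * Real.exp (-γ3 * b') = r) →
          A1' = A1 ∧ A2' = A2 ∧ A3' = A3 ∧ b' = b) ∧
        max a bstar < b ∧ 0 < A1 ∧ 0 < A2 := by
  intro a _
  have hbs : bstar = FreeBoundary.bStar η γ1 γ2 (-γ3) := by
    have hγ2 : γ2 ≠ 0 := ((h1.trans h2).trans h3).ne'
    rw [hbstar, FreeBoundary.bStar]
    field_simp [h1.ne', (h1.trans h2).ne', hγ2, h4.ne']
    ring
  have hden : ∀ X : ℝ, X * η / (-γ3 - η) = -(X * η / (γ3 + η)) := fun X => by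
    rw [show -γ3 - η = -(γ3 + η) by ring, div_neg]
  obtain ⟨A1, A2, A3, b, hsol, huniq, hb, hA1, hA2⟩ :=
    FreeBoundary.existsUnique_isSolution hr h1 h2 h3 (neg_neg_of_pos h4) a
  refine ⟨A1, A2, A3, b, ?_, fun A1' A2' A3' b' h' => huniq A1' A2' A3' b' ?_, hbs ▸ hb, hA1, hA2⟩
  · obtain ⟨hab, ⟨i, ii, iv⟩, iii⟩ := hsol
    rw [hden] at ii
    exact ⟨hab, i, by linear_combination ii, by linear_combination iii, by linear_combination iv⟩
  · obtain ⟨hab, i, ii, iii, iv⟩ := h'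
    refine ⟨hab, ⟨i, ?_, by linear_combination iv⟩, by linear_combination iii⟩
    rw [hden]
    linear_combination ii
end

section
/- The functions A1 and A2 are strictly increasing on (−∞, b*) and strictly decreasing on (b*, ∞), the function A3 is strictly increasing on (b*, ∞), A1(b) → 0 and A2(b) → 0 as b → ∞, and consequently A1(b) > 0 and A2(b) > 0 for every b ≥ b*, where b* = (−γ1γ2γ3 + η(−γ1γ2 + γ2γ3 + γ1γ3))/(η γ1 γ2 γ3). -/
/-!
Each `Aᵢ` is a positive multiple of `(b - b* - 1/d) e^{d b}`, with `d = -γ1, -γ2, γ3` respectively,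
whose derivative is a positive multiple of `d (b - b*) e^{d b}`: so `b*` is the only critical point,
and the sign of `d` decides monotonicity on either side of it. For `d < 0` the linear factor is
at least `-1/d > 0` on `[b*, ∞)`, and the exponential decay wins over it at `+∞`.
-/

open Filter Real Set Topology

noncomputable section

def affineMulExp (K t d b : ℝ) : ℝ := K * (b - t - d⁻¹) * exp (d * b)

variable {K t d : ℝ}

theorem continuous_affineMulExp : Continuous (affineMulExp K t d) := by
  unfold affineMulExp; fun_prop

theorem hasDerivAt_affineMulExp (hd : d ≠ 0) (x : ℝ) :
    HasDerivAt (affineMulExp K t d) (K * d * (x - t) * exp (d * x)) x := by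
  have hlin : HasDerivAt (fun b => K * (b - t - d⁻¹)) K x := by
    simpa using (((hasDerivAt_id x).sub_const t).sub_const d⁻¹).const_mul K
  have hexp : HasDerivAt (fun b => exp (d * b)) (exp (d * x) * d) x := by
    simpa using ((hasDerivAt_id x).const_mul d).exp
  refine (hlin.mul hexp).congr_deriv ?_
  field_simp
  ring

theorem strictMonoOn_affineMulExp_Iio (hK : 0 < K) (hd : d < 0) :
    StrictMonoOn (affineMulExp K t d) (Iio t) := by
  refine strictMonoOn_of_deriv_pos (convex_Iio t) continuous_affineMulExp.continuousOn
    fun x hx => ?_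
  rw [interior_Iio] at hx
  rw [(hasDerivAt_affineMulExp hd.ne x).deriv]
  have : 0 < K * d * (x - t) := mul_pos_of_neg_of_neg (mul_neg_of_pos_of_neg hK hd) (sub_neg.2 hx)
  positivity

theorem strictAntiOn_affineMulExp_Ioi (hK : 0 < K) (hd : d < 0) :
    StrictAntiOn (affineMulExp K t d) (Ioi t) := by
  refine strictAntiOn_of_deriv_neg (convex_Ioi t) continuous_affineMulExp.continuousOn
    fun x hx => ?_
  rw [interior_Ioi] at hx
  rw [(hasDerivAt_affineMulExp hd.ne x).deriv]
  exact mul_neg_of_neg_of_pos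
    (mul_neg_of_neg_of_pos (mul_neg_of_pos_of_neg hK hd) (sub_pos.2 hx)) (exp_pos _)

theorem strictMonoOn_affineMulExp_Ioi (hK : 0 < K) (hd : 0 < d) :
    StrictMonoOn (affineMulExp K t d) (Ioi t) := by
  refine strictMonoOn_of_deriv_pos (convex_Ioi t) continuous_affineMulExp.continuousOn
    fun x hx => ?_
  rw [interior_Ioi] at hx
  rw [(hasDerivAt_affineMulExp hd.ne' x).deriv]
  have : 0 < x - t := sub_pos.2 hx
  positivity

theorem tendsto_affineMulExp_atTop (hd : d < 0) :
    Tendsto (affineMulExp K t d) atTop (𝓝 0) := by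
  have hu : Tendsto (fun b => -d * b) atTop atTop :=
    tendsto_id.const_mul_atTop (neg_pos.2 hd)
  have hlim : Tendsto (fun u => K * (-d⁻¹ * (u ^ 1 * exp (-u)) - (t + d⁻¹) * exp (-u)))
      atTop (𝓝 0) := by
    simpa using (((tendsto_pow_mul_exp_neg_atTop_nhds_zero 1).const_mul (-d⁻¹)).sub
      (tendsto_exp_neg_atTop_nhds_zero.const_mul (t + d⁻¹))).const_mul K
  refine (hlim.comp hu).congr fun b => ?_
  simp only [Function.comp_apply, affineMulExp, neg_mul, neg_neg, pow_one]
  have := hd.ne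
  field_simp
  ring

theorem affineMulExp_pos (hK : 0 < K) (hd : d < 0) {b : ℝ} (hb : t ≤ b) :
    0 < affineMulExp K t d b := by
  have : 0 < b - t - d⁻¹ := by linarith [inv_lt_zero.2 hd]
  unfold affineMulExp
  positivity

end

/-- Monotonicity properties of `A1`, `A2`, `A3`, decay of `A1`, `A2` at `∞`,
and positivity of `A1`, `A2` on `[b*, ∞)`. -/
theorem stmt_7 (η γ1 γ2 γ3 r : ℝ)
    (h1 : 0 < γ1) (h2 : γ1 < η) (h3 : η < γ2) (h4 : 0 < γ3) (hr : 0 < r)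
    (A1 A2 A3 : ℝ → ℝ)
    (hA1 : ∀ b : ℝ, A1 b = r / η ^ 2 *
      ((η - γ1) * (γ2 * γ3 * (η * b + 1) + η * (γ2 - γ3)) / ((γ3 + γ1) * (γ2 - γ1))) *
      Real.exp (-γ1 * b))
    (hA2 : ∀ b : ℝ, A2 b = r / η ^ 2 *
      ((γ2 - η) * (γ1 * γ3 * (η * b + 1) + η * (γ1 - γ3)) / ((γ3 + γ2) * (γ2 - γ1))) *
      Real.exp (-γ2 * b))
    (hA3 : ∀ b : ℝ, A3 b = r / η ^ 2 *
      ((η + γ3) * (γ1 * γ2 * (η * b + 1) - η * (γ1 + γ2)) / ((γ3 + γ1) * (γ2 + γ3))) *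
      Real.exp (γ3 * b))
    (bstar : ℝ)
    (hbstar : bstar = (-(γ1 * γ2 * γ3) + η * (-(γ1 * γ2) + γ2 * γ3 + γ1 * γ3))
      / (η * γ1 * γ2 * γ3)) :
    StrictMonoOn A1 (Set.Iio bstar) ∧ StrictAntiOn A1 (Set.Ioi bstar) ∧
    StrictMonoOn A2 (Set.Iio bstar) ∧ StrictAntiOn A2 (Set.Ioi bstar) ∧
    StrictMonoOn A3 (Set.Ioi bstar) ∧
    Filter.Tendsto A1 Filter.atTop (nhds 0) ∧ Filter.Tendsto A2 Filter.atTop (nhds 0) ∧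
    ∀ b : ℝ, bstar ≤ b → 0 < A1 b ∧ 0 < A2 b := by
  have hη : 0 < η := h1.trans h2
  have h12 : 0 < γ2 - γ1 := by linarith
  have hη1 : 0 < η - γ1 := by linarith
  have h2η : 0 < γ2 - η := by linarith
  have hγ2 : 0 < γ2 := by linarith
  obtain ⟨K1, hK1, rfl⟩ : ∃ K > 0, A1 = affineMulExp K bstar (-γ1) :=
    ⟨r / η ^ 2 * ((η - γ1) * (γ2 * γ3 * η) / ((γ3 + γ1) * (γ2 - γ1))), by positivity,
      funext fun b => by rw [hA1, hbstar, affineMulExp]; field_simp; ring⟩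
  obtain ⟨K2, hK2, rfl⟩ : ∃ K > 0, A2 = affineMulExp K bstar (-γ2) :=
    ⟨r / η ^ 2 * ((γ2 - η) * (γ1 * γ3 * η) / ((γ3 + γ2) * (γ2 - γ1))), by positivity,
      funext fun b => by rw [hA2, hbstar, affineMulExp]; field_simp; ring⟩
  obtain ⟨K3, hK3, rfl⟩ : ∃ K > 0, A3 = affineMulExp K bstar γ3 :=
    ⟨r / η ^ 2 * ((η + γ3) * (γ1 * γ2 * η) / ((γ3 + γ1) * (γ2 + γ3))), by positivity,
      funext fun b => by rw [hA3, hbstar, affineMulExp]; field_simp; ring⟩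
  have hd1 : -γ1 < 0 := neg_lt_zero.2 h1
  have hd2 : -γ2 < 0 := neg_lt_zero.2 hγ2
  exact ⟨strictMonoOn_affineMulExp_Iio hK1 hd1, strictAntiOn_affineMulExp_Ioi hK1 hd1,
    strictMonoOn_affineMulExp_Iio hK2 hd2, strictAntiOn_affineMulExp_Ioi hK2 hd2,
    strictMonoOn_affineMulExp_Ioi hK3 h4, tendsto_affineMulExp_atTop hd1,
    tendsto_affineMulExp_atTop hd2,
    fun b hb => ⟨affineMulExp_pos hK1 hd1 hb, affineMulExp_pos hK2 hd2 hb⟩⟩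
end

section
/- Let f(x) = A1 e^{γ1 x} + A2 e^{γ2 x} + A3 e^{−γ3 x} with A1 > 0, A2 > 0, A3 ∈ ℝ and γ1, γ2, γ3 > 0. Suppose a < b are real numbers with f′(a) = 1, f′(b) = r for some r > 1, and f(b) = r·b. Then f′(x) < r for every x ∈ [a, b), and f(x) > r·x for every x ∈ [a, b). -/
/-
Write `g = f'` and `ψ x = (g x - r) e^{γ₃ x}`. Multiplying by `e^{γ₃ x}` kills the decaying term
in the derivative: `ψ' x = e^{γ₃ x} u x` with
`u x = A₁ γ₁ (γ₁ + γ₃) e^{γ₁ x} + A₂ γ₂ (γ₂ + γ₃) e^{γ₂ x} - r γ₃` strictly increasing. Hence once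
`ψ'` is positive it stays positive. Since `ψ a < 0 = ψ b`, a point `c ∈ (a, b)` with `ψ c ≥ 0`
would, by the mean value theorem on `[a, c]`, force `ψ` to increase strictly on `[c, b]`, which is
absurd. So `f' < r` on `[a, b)`, and integrating `f' - r < 0` from `x` to `b` gives `f x > r x`.
-/

open Real Set

noncomputable def expSum (A₁ A₂ A₃ c₁ c₂ c₃ x : ℝ) : ℝ :=
  A₁ * exp (c₁ * x) + A₂ * exp (c₂ * x) + A₃ * exp (c₃ * x)

lemma hasDerivAt_const_mul_exp_mul (A c x : ℝ) :
    HasDerivAt (fun y => A * exp (c * y)) (A * c * exp (c * x)) x :=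
  (((hasDerivAt_const_mul c).exp).const_mul A).congr_deriv (by ring)

lemma hasDerivAt_expSum (A₁ A₂ A₃ c₁ c₂ c₃ x : ℝ) :
    HasDerivAt (expSum A₁ A₂ A₃ c₁ c₂ c₃)
      (expSum (A₁ * c₁) (A₂ * c₂) (A₃ * c₃) c₁ c₂ c₃ x) x :=
  ((hasDerivAt_const_mul_exp_mul A₁ c₁ x).add (hasDerivAt_const_mul_exp_mul A₂ c₂ x)).add
    (hasDerivAt_const_mul_exp_mul A₃ c₃ x)

lemma strictMono_const_mul_exp_mul {A c : ℝ} (hA : 0 < A) (hc : 0 < c) :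
    StrictMono fun x => A * exp (c * x) :=
  fun _ _ hxy => mul_lt_mul_of_pos_left (exp_lt_exp.2 (mul_lt_mul_of_pos_left hxy hc)) hA

theorem lt_right_of_deriv_pos_persistent {ψ ψ' : ℝ → ℝ} {a b : ℝ}
    (hcont : ContinuousOn ψ (Icc a b)) (hderiv : ∀ x ∈ Ioo a b, HasDerivAt ψ (ψ' x) x)
    (hpersist : ∀ s ∈ Ioo a b, 0 < ψ' s → ∀ t ∈ Ioo s b, 0 < ψ' t) (hab : ψ a < ψ b) :
    ∀ c ∈ Ico a b, ψ c < ψ b := by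
  intro c hc
  rcases le_or_gt (ψ c) (ψ a) with hca | hac
  · exact hca.trans_lt hab
  have hlt : a < c := hc.1.lt_of_ne (by rintro rfl; exact hac.false)
  obtain ⟨t, ht, hslope⟩ := exists_hasDerivAt_eq_slope ψ ψ' hlt
    (hcont.mono (Icc_subset_Icc_right hc.2.le)) fun x hx => hderiv x ⟨hx.1, hx.2.trans hc.2⟩
  have htpos : 0 < ψ' t := hslope ▸ div_pos (sub_pos.2 hac) (sub_pos.2 hlt)
  have ht' : t ∈ Ioo a b := ⟨ht.1, ht.2.trans hc.2⟩
  have hmono : StrictMonoOn ψ (Icc t b) := by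
    refine strictMonoOn_of_deriv_pos (convex_Icc t b)
      (hcont.mono (Icc_subset_Icc_left ht.1.le)) fun x hx => ?_
    rw [interior_Icc] at hx
    rw [(hderiv x ⟨ht.1.trans hx.1, hx.2⟩).deriv]
    exact hpersist t ht' htpos x hx
  exact hmono ⟨ht.2.le, hc.2.le⟩ ⟨ht'.2.le, le_rfl⟩ hc.2

theorem expSum_lt_of_lt_of_eq {B₁ B₂ B₃ c₁ c₂ γ a b r : ℝ} (hB₁ : 0 < B₁) (hB₂ : 0 < B₂)
    (hc₁ : 0 < c₁) (hc₂ : 0 < c₂) (hγ : 0 ≤ γ)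
    (ha : expSum B₁ B₂ B₃ c₁ c₂ (-γ) a < r) (hb : expSum B₁ B₂ B₃ c₁ c₂ (-γ) b = r) :
    ∀ x ∈ Ico a b, expSum B₁ B₂ B₃ c₁ c₂ (-γ) x < r := by
  set g := expSum B₁ B₂ B₃ c₁ c₂ (-γ)
  set u : ℝ → ℝ := fun x =>
    B₁ * (c₁ + γ) * exp (c₁ * x) + B₂ * (c₂ + γ) * exp (c₂ * x) - r * γ
  have hψ : ∀ x, HasDerivAt (fun y => (g y - r) * exp (γ * y)) (exp (γ * x) * u x) x := by
    intro x
    refine (((hasDerivAt_expSum B₁ B₂ B₃ c₁ c₂ (-γ) x).sub_const r).mul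
      (hasDerivAt_const_mul γ).exp).congr_deriv ?_
    simp only [u, expSum]
    ring
  have hu : StrictMono u :=
    ((strictMono_const_mul_exp_mul (mul_pos hB₁ (by positivity)) hc₁).add
      (strictMono_const_mul_exp_mul (mul_pos hB₂ (by positivity)) hc₂)).add_const _
  have hpersist : ∀ s ∈ Ioo a b, 0 < exp (γ * s) * u s → ∀ t ∈ Ioo s b, 0 < exp (γ * t) * u t :=
    fun s _ hs t ht =>
      mul_pos (exp_pos _) ((pos_of_mul_pos_right hs (exp_pos _).le).trans (hu ht.1))
  have hψab : (g a - r) * exp (γ * a) < (g b - r) * exp (γ * b) := by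
    rw [hb, sub_self, zero_mul]
    exact mul_neg_of_neg_of_pos (sub_neg.2 ha) (exp_pos _)
  intro x hx
  have hψx := lt_right_of_deriv_pos_persistent
    (fun y _ => (hψ y).continuousAt.continuousWithinAt) (fun y _ => hψ y) hpersist hψab x hx
  rw [hb, sub_self, zero_mul] at hψx
  exact sub_neg.1 (neg_of_mul_neg_left hψx (exp_pos _).le)

theorem stmt_9_general (A1 A2 A3 γ1 γ2 γ3 a b r : ℝ) (hA1 : 0 < A1) (hA2 : 0 < A2)
    (hγ1 : 0 < γ1) (hγ2 : 0 < γ2) (hγ3 : 0 < γ3)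
    (f : ℝ → ℝ)
    (hf : ∀ x : ℝ, f x = A1 * Real.exp (γ1 * x) + A2 * Real.exp (γ2 * x)
      + A3 * Real.exp (-γ3 * x))
    (hr : 1 < r)
    (hfa : deriv f a = 1) (hfb : deriv f b = r) (hfbval : f b = r * b) :
    (∀ x ∈ Set.Ico a b, deriv f x < r) ∧ ∀ x ∈ Set.Ico a b, r * x < f x := by
  obtain rfl : f = expSum A1 A2 A3 γ1 γ2 (-γ3) := funext hf
  have hderiv := hasDerivAt_expSum A1 A2 A3 γ1 γ2 (-γ3)
  simp only [fun x => (hderiv x).deriv] at hfa hfb ⊢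
  have hlt := expSum_lt_of_lt_of_eq (mul_pos hA1 hγ1) (mul_pos hA2 hγ2) hγ1 hγ2 hγ3.le
    (hfa.trans_lt hr) hfb
  refine ⟨hlt, fun x hx => ?_⟩
  have hdiff : Differentiable ℝ (expSum A1 A2 A3 γ1 γ2 (-γ3)) :=
    fun y => (hderiv y).differentiableAt
  have hsub := (convex_Icc x b).image_sub_lt_mul_sub_of_deriv_lt (C := r)
    hdiff.continuous.continuousOn hdiff.differentiableOn
    (fun y hy => by
      rw [interior_Icc] at hy
      rw [(hderiv y).deriv]
      exact hlt y ⟨hx.1.trans hy.1.le, hy.2⟩)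
    x ⟨le_rfl, hx.2.le⟩ b ⟨hx.2.le, le_rfl⟩ hx.2
  linarith

/-- If `f'(a) = 1`, `f'(b) = r > 1` and `f(b) = r b` with `a < b`, then
`f' < r` and `f(x) > r x` on `[a, b)`. -/
theorem stmt_9 (A1 A2 A3 γ1 γ2 γ3 a b r : ℝ) (hA1 : 0 < A1) (hA2 : 0 < A2)
    (hγ1 : 0 < γ1) (hγ2 : 0 < γ2) (hγ3 : 0 < γ3)
    (f : ℝ → ℝ)
    (hf : ∀ x : ℝ, f x = A1 * Real.exp (γ1 * x) + A2 * Real.exp (γ2 * x)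
      + A3 * Real.exp (-γ3 * x))
    (hab : a < b) (hr : 1 < r)
    (hfa : deriv f a = 1) (hfb : deriv f b = r) (hfbval : f b = r * b) :
    (∀ x ∈ Set.Ico a b, deriv f x < r) ∧ ∀ x ∈ Set.Ico a b, r * x < f x :=
  stmt_9_general A1 A2 A3 γ1 γ2 γ3 a b r hA1 hA2 hγ1 hγ2 hγ3 f hf hr hfa hfb hfbval
end

section
/- Let γ1, γ2, γ3 > 0 with γ1 ≠ γ2, and let Ã1, Ã2, Ã3 : [0, ∞) → ℝ be differentiable functions. Define v0(x; a) = Ã1(a) e^{γ1 x} + Ã2(a) e^{γ2 x} + Ã3(a) e^{−γ3 x}. Suppose that γ1 Ã1(a) e^{γ1 a} + γ2 Ã2(a) e^{γ2 a} − γ3 Ã3(a) e^{−γ3 a} = 1 for every a ≥ 0, and that ã > 0 is a local extremum of the map a ↦ v0(x; a) for every x ≥ 0. Then Ã1′(ã) = Ã2′(ã) = Ã3′(ã) = 0 and γ1² Ã1(ã) e^{γ1 ã} + γ2² Ã2(ã) e^{γ2 ã} + γ3² Ã3(ã) e^{−γ3 ã} = 0 (second-order smooth fit at ã). -/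
/-- If `ã > 0` is a local extremum of `a ↦ v0(x; a)` for every `x ≥ 0`, and the
first-order smooth fit condition holds for every `a ≥ 0`, then the derivatives of the
coefficient functions vanish at `ã` and the second-order smooth fit condition holds at `ã`. -/
theorem stmt_10 (γ1 γ2 γ3 : ℝ) (hγ1 : 0 < γ1) (hγ2 : 0 < γ2) (hγ3 : 0 < γ3) (h12 : γ1 ≠ γ2)
    (At1 At2 At3 : ℝ → ℝ)
    (hd1 : DifferentiableOn ℝ At1 (Set.Ici 0))
    (hd2 : DifferentiableOn ℝ At2 (Set.Ici 0))
    (hd3 : DifferentiableOn ℝ At3 (Set.Ici 0))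
    (v0 : ℝ → ℝ → ℝ)
    (hv0 : ∀ x a : ℝ, v0 x a = At1 a * Real.exp (γ1 * x) + At2 a * Real.exp (γ2 * x)
      + At3 a * Real.exp (-γ3 * x))
    (hfit : ∀ a : ℝ, 0 ≤ a → γ1 * At1 a * Real.exp (γ1 * a) + γ2 * At2 a * Real.exp (γ2 * a)
      - γ3 * At3 a * Real.exp (-γ3 * a) = 1)
    (ta : ℝ) (hta : 0 < ta)
    (hext : ∀ x : ℝ, 0 ≤ x → IsLocalExtr (fun a => v0 x a) ta) :
    deriv At1 ta = 0 ∧ deriv At2 ta = 0 ∧ deriv At3 ta = 0 ∧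
      γ1 ^ 2 * At1 ta * Real.exp (γ1 * ta) + γ2 ^ 2 * At2 ta * Real.exp (γ2 * ta)
        + γ3 ^ 2 * At3 ta * Real.exp (-γ3 * ta) = 0 := by
  have hmem : Set.Ici (0:ℝ) ∈ nhds ta := Ici_mem_nhds hta
  have ha1 : DifferentiableAt ℝ At1 ta := hd1.differentiableAt hmem
  have ha2 : DifferentiableAt ℝ At2 ta := hd2.differentiableAt hmem
  have ha3 : DifferentiableAt ℝ At3 ta := hd3.differentiableAt hmem
  set d1 := deriv At1 ta with hD1
  set d2 := deriv At2 ta with hD2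
  set d3 := deriv At3 ta with hD3
  have key : ∀ x : ℝ, 0 ≤ x →
      d1 * Real.exp (γ1 * x) + d2 * Real.exp (γ2 * x) + d3 * Real.exp (-γ3 * x) = 0 := by
    intro x hx
    have hE : (fun a => v0 x a) =
        fun a => At1 a * Real.exp (γ1 * x) + At2 a * Real.exp (γ2 * x)
          + At3 a * Real.exp (-γ3 * x) := funext (fun a => hv0 x a)
    have hext' := hext x hx
    rw [hE] at hext'
    have hder : HasDerivAt (fun a => At1 a * Real.exp (γ1 * x) + At2 a * Real.exp (γ2 * x)
          + At3 a * Real.exp (-γ3 * x))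
        (d1 * Real.exp (γ1 * x) + d2 * Real.exp (γ2 * x) + d3 * Real.exp (-γ3 * x)) ta :=
      ((ha1.hasDerivAt.mul_const _).add (ha2.hasDerivAt.mul_const _)).add
        (ha3.hasDerivAt.mul_const _)
    have h0 := hext'.deriv_eq_zero
    rw [hder.deriv] at h0
    exact h0
  set u := Real.exp γ1 with hu
  set v := Real.exp γ2 with hv
  set w := Real.exp (-γ3) with hw
  have huv : u ≠ v := fun h => h12 (Real.exp_injective h)
  have huw : u ≠ w := fun h => by
    have := Real.exp_injective h; linarith
  have hvw : v ≠ w := fun h => by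
    have := Real.exp_injective h; linarith
  have e0 : d1 + d2 + d3 = 0 := by
    have := key 0 le_rfl; simpa using this
  have e1 : d1 * u + d2 * v + d3 * w = 0 := by
    have := key 1 zero_le_one; simpa using this
  have e2 : d1 * u ^ 2 + d2 * v ^ 2 + d3 * w ^ 2 = 0 := by
    have h := key 2 (by norm_num)
    have hq1 : Real.exp (γ1 * 2) = u ^ 2 := by
      rw [show γ1 * 2 = γ1 + γ1 by ring, Real.exp_add]; ring
    have hq2 : Real.exp (γ2 * 2) = v ^ 2 := by
      rw [show γ2 * 2 = γ2 + γ2 by ring, Real.exp_add]; ring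
    have hq3 : Real.exp (-γ3 * 2) = w ^ 2 := by
      rw [show -γ3 * 2 = -γ3 + -γ3 by ring, Real.exp_add]; ring
    rw [hq1, hq2, hq3] at h
    exact h
  have hz1 : d1 = 0 := by
    have h : d1 * ((u - v) * (u - w)) = 0 := by linear_combination e2 - (v + w) * e1 + v * w * e0
    rcases mul_eq_zero.mp h with h' | h'
    · exact h'
    · rcases mul_eq_zero.mp h' with h'' | h''
      · exact absurd (sub_eq_zero.mp h'') huv
      · exact absurd (sub_eq_zero.mp h'') huw
  have hz2 : d2 = 0 := by
    have h : d2 * ((v - u) * (v - w)) = 0 := by linear_combination e2 - (u + w) * e1 + u * w * e0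
    rcases mul_eq_zero.mp h with h' | h'
    · exact h'
    · rcases mul_eq_zero.mp h' with h'' | h''
      · exact absurd (sub_eq_zero.mp h'') (fun hh => huv hh.symm)
      · exact absurd (sub_eq_zero.mp h'') hvw
  have hz3 : d3 = 0 := by linarith
  refine ⟨hz1, hz2, hz3, ?_⟩
  -- second order condition: differentiate the fit identity
  have he1 : HasDerivAt (fun a => Real.exp (γ1 * a)) (γ1 * Real.exp (γ1 * ta)) ta := by
    simpa [mul_comm] using (((hasDerivAt_id ta).const_mul γ1).exp)
  have he2 : HasDerivAt (fun a => Real.exp (γ2 * a)) (γ2 * Real.exp (γ2 * ta)) ta := by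
    simpa [mul_comm] using (((hasDerivAt_id ta).const_mul γ2).exp)
  have he3 : HasDerivAt (fun a => Real.exp (-γ3 * a)) (-γ3 * Real.exp (-γ3 * ta)) ta := by
    simpa [mul_comm] using (((hasDerivAt_id ta).const_mul (-γ3)).exp)
  have hg : HasDerivAt (fun a => γ1 * At1 a * Real.exp (γ1 * a) + γ2 * At2 a * Real.exp (γ2 * a)
        - γ3 * At3 a * Real.exp (-γ3 * a))
      ((γ1 * d1 * Real.exp (γ1 * ta) + γ1 * At1 ta * (γ1 * Real.exp (γ1 * ta)))
        + (γ2 * d2 * Real.exp (γ2 * ta) + γ2 * At2 ta * (γ2 * Real.exp (γ2 * ta)))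
        - (γ3 * d3 * Real.exp (-γ3 * ta) + γ3 * At3 ta * (-γ3 * Real.exp (-γ3 * ta)))) ta := by
    exact (((ha1.hasDerivAt.const_mul γ1).mul he1).add
      ((ha2.hasDerivAt.const_mul γ2).mul he2)).sub ((ha3.hasDerivAt.const_mul γ3).mul he3)
  have hEq : (fun a => γ1 * At1 a * Real.exp (γ1 * a) + γ2 * At2 a * Real.exp (γ2 * a)
        - γ3 * At3 a * Real.exp (-γ3 * a)) =ᶠ[nhds ta] (fun _ => (1:ℝ)) :=
    Filter.eventuallyEq_of_mem hmem (fun a ha => hfit a ha)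
  have hderiv0 : deriv (fun a => γ1 * At1 a * Real.exp (γ1 * a) + γ2 * At2 a * Real.exp (γ2 * a)
        - γ3 * At3 a * Real.exp (-γ3 * a)) ta = 0 := by
    rw [hEq.deriv_eq]; exact deriv_const ta 1
  have hD := hg.deriv
  rw [hderiv0] at hD
  rw [hz1, hz2, hz3] at hD
  nlinarith [hD, Real.exp_pos (γ1 * ta), Real.exp_pos (γ2 * ta), Real.exp_pos (-γ3 * ta)]
end

section
/- Let b : [0, ∞) → ℝ be a continuous function with b(a) > a for every a ≥ 0, and suppose ã ∈ (0, ∞) is a local extremum point of b and is the unique local extremum point of b on (0, ∞). Then ã is the strict global minimum of b, i.e. b(ã) < b(a) for every a ≥ 0 with a ≠ ã. -/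
open Set

/-- Between two points with equal values, a continuous function has a local extremum. -/
lemma exists_localExtr_between {b : ℝ → ℝ} {x y : ℝ} (hxy : x < y)
    (hc : ContinuousOn b (Icc x y)) (heq : b x = b y) :
    ∃ c ∈ Ioo x y, IsLocalExtr b c := by
  obtain ⟨c1, hc1, hmax⟩ := isCompact_Icc.exists_isMaxOn (nonempty_Icc.2 hxy.le) hc
  obtain ⟨c2, hc2, hmin⟩ := isCompact_Icc.exists_isMinOn (nonempty_Icc.2 hxy.le) hc
  by_cases h1 : c1 ∈ Ioo x y
  · exact ⟨c1, h1, Or.inr (hmax.isLocalMax (Icc_mem_nhds h1.1 h1.2))⟩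
  by_cases h2 : c2 ∈ Ioo x y
  · exact ⟨c2, h2, Or.inl (hmin.isLocalMin (Icc_mem_nhds h2.1 h2.2))⟩
  -- both extrema at endpoints: b is constant
  have hb1 : b c1 = b x := by
    rcases eq_or_lt_of_le hc1.1 with h | h
    · rw [← h]
    · have : c1 = y := le_antisymm hc1.2 (by by_contra hlt; exact h1 ⟨h, lt_of_not_ge hlt⟩)
      rw [this, ← heq]
  have hb2 : b c2 = b x := by
    rcases eq_or_lt_of_le hc2.1 with h | h
    · rw [← h]
    · have : c2 = y := le_antisymm hc2.2 (by by_contra hlt; exact h2 ⟨h, lt_of_not_ge hlt⟩)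
      rw [this, ← heq]
  set m := (x + y) / 2 with hm
  have hmIoo : m ∈ Ioo x y := ⟨by linarith, by linarith⟩
  have hbm : b m = b x := le_antisymm (hb1 ▸ hmax ⟨hmIoo.1.le, hmIoo.2.le⟩)
    (hb2 ▸ hmin ⟨hmIoo.1.le, hmIoo.2.le⟩)
  refine ⟨m, hmIoo, Or.inr (IsMaxOn.isLocalMax ?_ (Icc_mem_nhds hmIoo.1 hmIoo.2))⟩
  intro z hz
  simpa [hbm, hb1] using hmax hz

/-- If `b` is continuous on `[0, ∞)` with `b(a) > a` for all `a ≥ 0`, and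
`ã > 0` is the unique local extremum point of `b` on `(0, ∞)`, then `ã` is the strict
global minimum of `b` on `[0, ∞)`. -/
theorem stmt_12 (b : ℝ → ℝ) (hcont : ContinuousOn b (Set.Ici 0))
    (hgt : ∀ a : ℝ, 0 ≤ a → a < b a)
    (ta : ℝ) (hta : 0 < ta)
    (hext : IsLocalExtr b ta)
    (huniq : ∀ a : ℝ, 0 < a → IsLocalExtr b a → a = ta) :
    ∀ a : ℝ, 0 ≤ a → a ≠ ta → b ta < b a := by
  -- injectivity on [0, ta]
  have inj1 : InjOn b (Icc 0 ta) := by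
    intro x hx y hy hxy
    by_contra hne
    rcases lt_trichotomy x y with hlt | heq | hlt
    · obtain ⟨c, hc, hextc⟩ := exists_localExtr_between hlt
        (hcont.mono (fun z hz => le_trans hx.1 hz.1)) hxy
      have := huniq c (lt_of_le_of_lt hx.1 hc.1) hextc
      exact absurd (this ▸ hc.2) (not_lt.2 hy.2)
    · exact hne heq
    · obtain ⟨c, hc, hextc⟩ := exists_localExtr_between hlt
        (hcont.mono (fun z hz => le_trans hy.1 hz.1)) hxy.symm
      have := huniq c (lt_of_le_of_lt hy.1 hc.1) hextc
      exact absurd (this ▸ hc.2) (not_lt.2 hx.2)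
  -- injectivity on [ta, N] for any N
  have inj2 : ∀ N : ℝ, InjOn b (Icc ta N) := by
    intro N x hx y hy hxy
    by_contra hne
    rcases lt_trichotomy x y with hlt | heq | hlt
    · obtain ⟨c, hc, hextc⟩ := exists_localExtr_between hlt
        (hcont.mono (fun z hz => le_trans (le_trans hta.le hx.1) hz.1)) hxy
      have := huniq c (lt_of_le_of_lt (le_trans hta.le hx.1) hc.1) hextc
      exact absurd (this ▸ hc.1) (not_lt.2 hx.1)
    · exact hne heq
    · obtain ⟨c, hc, hextc⟩ := exists_localExtr_between hlt
        (hcont.mono (fun z hz => le_trans (le_trans hta.le hy.1) hz.1)) hxy.symm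
      have := huniq c (lt_of_le_of_lt (le_trans hta.le hy.1) hc.1) hextc
      exact absurd (this ▸ hc.1) (not_lt.2 hy.1)
  -- on [ta, N] with N ≥ b ta, b is strictly increasing
  have mono2 : ∀ N : ℝ, b ta ≤ N → ta < N → StrictMonoOn b (Icc ta N) := by
    intro N hN htN
    rcases ContinuousOn.strictMonoOn_of_injOn_Icc' htN.le
      (hcont.mono (fun z hz => le_trans hta.le hz.1)) (inj2 N) with h | h
    · exact h
    · exfalso
      have h1 : b N < b ta := h (left_mem_Icc.2 htN.le) (right_mem_Icc.2 htN.le) htN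
      have h2 : N < b N := hgt N (le_trans hta.le htN.le)
      linarith
  -- on [0, ta], b is strictly decreasing
  have anti1 : StrictAntiOn b (Icc 0 ta) := by
    rcases ContinuousOn.strictMonoOn_of_injOn_Icc' hta.le
      (hcont.mono Icc_subset_Ici_self) inj1 with h | h
    · exfalso
      set N := max (b ta) (ta + 1) with hN
      have htaN : ta < N := lt_of_lt_of_le (lt_add_one ta) (le_max_right _ _)
      have hmono2 := mono2 N (le_max_left _ _) htaN
      rcases hext with hmin | hmax
      · -- local min: contradiction with increasing on the left
        have hev : ∀ᶠ z in nhdsWithin ta (Iio ta), b ta ≤ b z :=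
          hmin.filter_mono nhdsWithin_le_nhds
        have hev2 : ∀ᶠ z in nhdsWithin ta (Iio ta), z ∈ Ioo 0 ta := by
          filter_upwards [Ioo_mem_nhdsLT_of_mem (Set.mem_Ioc.2 ⟨hta, le_refl ta⟩)] with z hz
          exact hz
        have : ∀ᶠ z in nhdsWithin ta (Iio ta), False := by
          filter_upwards [hev, hev2] with z h1 h2
          exact absurd (h ⟨h2.1.le, h2.2.le⟩ (right_mem_Icc.2 hta.le) h2.2) (not_lt.2 h1)
        exact (this.exists.elim fun _ => id)
      · -- local max: contradiction with increasing on the right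
        have hev : ∀ᶠ z in nhdsWithin ta (Ioi ta), b z ≤ b ta :=
          hmax.filter_mono nhdsWithin_le_nhds
        have hev2 : ∀ᶠ z in nhdsWithin ta (Ioi ta), z ∈ Ioo ta N := by
          filter_upwards [Ioo_mem_nhdsGT_of_mem (Set.mem_Ico.2 ⟨le_refl ta, htaN⟩)] with z hz
          exact hz
        have : ∀ᶠ z in nhdsWithin ta (Ioi ta), False := by
          filter_upwards [hev, hev2] with z h1 h2
          exact absurd (hmono2 (left_mem_Icc.2 htaN.le) ⟨h2.1.le, h2.2.le⟩ h2.1)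
            (not_lt.2 h1)
        exact (this.exists.elim fun _ => id)
    · exact h
  -- conclusion
  intro a ha hne
  rcases lt_or_gt_of_ne hne with hlt | hgt'
  · exact anti1 ⟨ha, hlt.le⟩ (right_mem_Icc.2 hta.le) hlt
  · have hN : b ta ≤ max a (b ta) := le_max_right _ _
    have htN : ta < max a (b ta) := lt_of_lt_of_le hgt' (le_max_left _ _)
    exact mono2 _ hN htN (left_mem_Icc.2 htN.le) ⟨hgt'.le, le_max_left _ _⟩ hgt'
end

section
/- For every b ∈ ℝ: B1(b) > 0, B2(b) > 0, B3(b) < 0, and the triple (B1(b), B2(b), B3(b)) is the unique solution (B1, B2, B3) ∈ ℝ³ of the linear system: (i) (B1 η/(γ1−η)) e^{γ1 b} + (B2 η/(γ2−η)) e^{γ2 b} − (B3 η/(γ3+η)) e^{−γ3 b} + B1 e^{γ1 b} + B2 e^{γ2 b} + B3 e^{−γ3 b} + 1/η = 0; (ii) γ1 B1 e^{γ1 b} + γ2 B2 e^{γ2 b} − γ3 B3 e^{−γ3 b} = 1; (iii) γ1² B1 e^{γ1 b} + γ2² B2 e^{γ2 b} + γ3² B3 e^{−γ3 b} = 0. 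-/
set_option maxHeartbeats 2000000

lemma aux_solve (η γ1 γ2 γ3 U V W : ℝ)
    (h1 : 0 < γ1) (h2 : γ1 < η) (h3 : η < γ2) (h4 : 0 < γ3)
    (hA : U * η / (γ1 - η) + V * η / (γ2 - η) - W * η / (γ3 + η)
        + U + V + W + 1 / η = 0)
    (hB : γ1 * U + γ2 * V - γ3 * W = 1)
    (hC : γ1 ^ 2 * U + γ2 ^ 2 * V + γ3 ^ 2 * W = 0) :
    U = γ2 * γ3 * (η - γ1) / (η * (γ1 * (γ2 - γ1) * (γ1 + γ3))) ∧
    V = γ3 * γ1 * (γ2 - η) / (η * (γ2 * (γ2 + γ3) * (γ2 - γ1))) ∧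
    W = -(γ1 * γ2 * (η + γ3) / (η * (γ3 * (γ1 + γ3) * (γ2 + γ3)))) := by
  have hη : (0:ℝ) < η := h1.trans h2
  have n1 : γ1 - η ≠ 0 := by linarith
  have n2 : γ2 - η ≠ 0 := by linarith
  have n3 : γ3 + η ≠ 0 := by linarith
  have nη : η ≠ 0 := ne_of_gt hη
  have hA' : η * γ1 * (γ2 - η) * (γ3 + η) * U + η * γ2 * (γ1 - η) * (γ3 + η) * V
      + η * γ3 * (γ1 - η) * (γ2 - η) * W + (γ1 - η) * (γ2 - η) * (γ3 + η) = 0 := by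
    field_simp at hA
    linear_combination hA
  have hU' : U * (η * (γ2 - γ1) * γ1 * (γ1 + γ3)) = γ2 * γ3 * (η - γ1) := by
    linear_combination hA' + (η*(γ1-η)*(γ2-η) - η*(γ1-η)*γ3) * hB - η*(γ1-η) * hC
  have hV' : V * (η * (γ2 - γ1) * γ2 * (γ2 + γ3)) = γ1 * γ3 * (γ2 - η) := by
    linear_combination (-1) * hA' + (η*(γ2-η)*γ3 - η*(γ2-η)*(γ1-η)) * hB + η*(γ2-η) * hC
  have hW' : W * (η * γ3 ^ 2 * (γ1 + γ3) * (γ2 + γ3) * (γ2 - γ1))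
      = -(γ1 * γ2 * γ3 * (η + γ3) * (γ2 - γ1)) := by
    linear_combination η*(γ1+γ3)*(γ2+γ3)*(γ2-γ1) * hC - γ1*(γ2+γ3) * hU' - γ2*(γ1+γ3) * hV'
  have n4 : γ2 - γ1 ≠ 0 := by linarith
  have n5 : γ1 + γ3 ≠ 0 := by nlinarith
  have n6 : γ2 + γ3 ≠ 0 := by nlinarith
  have nγ1 : γ1 ≠ 0 := ne_of_gt h1
  have nγ2 : γ2 ≠ 0 := by nlinarith
  have nγ3 : γ3 ≠ 0 := ne_of_gt h4
  have p1 : (0:ℝ) < η * (γ1 * (γ2 - γ1) * (γ1 + γ3)) :=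
    mul_pos hη (mul_pos (mul_pos h1 (by linarith)) (by linarith))
  have p2 : (0:ℝ) < η * (γ2 * (γ2 + γ3) * (γ2 - γ1)) :=
    mul_pos hη (mul_pos (mul_pos (by linarith) (by linarith)) (by linarith))
  have p3 : (0:ℝ) < η * (γ3 * (γ1 + γ3) * (γ2 + γ3)) :=
    mul_pos hη (mul_pos (mul_pos h4 (by linarith)) (by linarith))
  refine ⟨?_, ?_, ?_⟩
  · rw [eq_div_iff (ne_of_gt p1)]
    linear_combination hU'
  · rw [eq_div_iff (ne_of_gt p2)]
    linear_combination hV'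
  · have hW2 : W * (η * (γ3 * (γ1 + γ3) * (γ2 + γ3))) = -(γ1 * γ2 * (η + γ3)) := by
      apply mul_left_cancel₀ (mul_ne_zero n4 nγ3)
      linear_combination hW'
    rw [← neg_div, eq_div_iff (ne_of_gt p3)]
    linear_combination hW2


/-- For every `b`: `B1(b) > 0`, `B2(b) > 0`, `B3(b) < 0` and
`(B1(b), B2(b), B3(b))` is the unique solution of the linear system (i)-(iii). -/
theorem stmt_13 (η γ1 γ2 γ3 : ℝ)
    (h1 : 0 < γ1) (h2 : γ1 < η) (h3 : η < γ2) (h4 : 0 < γ3)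
    (B1 B2 B3 : ℝ → ℝ)
    (hB1 : ∀ b : ℝ, B1 b = Real.exp (-γ1 * b) / η *
      (γ2 * γ3 * (η - γ1) / (γ1 * (γ2 - γ1) * (γ1 + γ3))))
    (hB2 : ∀ b : ℝ, B2 b = Real.exp (-γ2 * b) / η *
      (γ3 * γ1 * (γ2 - η) / (γ2 * (γ2 + γ3) * (γ2 - γ1))))
    (hB3 : ∀ b : ℝ, B3 b = -(Real.exp (γ3 * b) / η *
      (γ1 * γ2 * (η + γ3) / (γ3 * (γ1 + γ3) * (γ2 + γ3))))) :
    ∀ b : ℝ, 0 < B1 b ∧ 0 < B2 b ∧ B3 b < 0 ∧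
      ∀ x y z : ℝ,
        (x * η / (γ1 - η) * Real.exp (γ1 * b) + y * η / (γ2 - η) * Real.exp (γ2 * b)
            - z * η / (γ3 + η) * Real.exp (-γ3 * b)
            + x * Real.exp (γ1 * b) + y * Real.exp (γ2 * b) + z * Real.exp (-γ3 * b)
            + 1 / η = 0 ∧
          γ1 * x * Real.exp (γ1 * b) + γ2 * y * Real.exp (γ2 * b)
            - γ3 * z * Real.exp (-γ3 * b) = 1 ∧
          γ1 ^ 2 * x * Real.exp (γ1 * b) + γ2 ^ 2 * y * Real.exp (γ2 * b)
            + γ3 ^ 2 * z * Real.exp (-γ3 * b) = 0)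
        ↔ (x = B1 b ∧ y = B2 b ∧ z = B3 b) := by
  intro b
  have hη : (0:ℝ) < η := h1.trans h2
  have nη : η ≠ 0 := ne_of_gt hη
  have P1 : (0:ℝ) < γ2 * γ3 * (η - γ1) / (γ1 * (γ2 - γ1) * (γ1 + γ3)) := by
    apply div_pos
    · exact mul_pos (mul_pos (by linarith) h4) (by linarith)
    · exact mul_pos (mul_pos h1 (by linarith)) (by linarith)
  have P2 : (0:ℝ) < γ3 * γ1 * (γ2 - η) / (γ2 * (γ2 + γ3) * (γ2 - γ1)) := by
    apply div_pos
    · exact mul_pos (mul_pos h4 h1) (by linarith)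
    · exact mul_pos (mul_pos (by linarith) (by linarith)) (by linarith)
  have P3 : (0:ℝ) < γ1 * γ2 * (η + γ3) / (γ3 * (γ1 + γ3) * (γ2 + γ3)) := by
    apply div_pos
    · exact mul_pos (mul_pos h1 (by linarith)) (by linarith)
    · exact mul_pos (mul_pos h4 (by linarith)) (by linarith)
  have ee1 : Real.exp (-γ1 * b) = (Real.exp (γ1 * b))⁻¹ := by
    rw [← Real.exp_neg]; ring_nf
  have ee2 : Real.exp (-γ2 * b) = (Real.exp (γ2 * b))⁻¹ := by
    rw [← Real.exp_neg]; ring_nf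
  have ee3 : Real.exp (-γ3 * b) = (Real.exp (γ3 * b))⁻¹ := by
    rw [← Real.exp_neg]; ring_nf
  have E1 : Real.exp (γ1 * b) ≠ 0 := (Real.exp_pos _).ne'
  have E2 : Real.exp (γ2 * b) ≠ 0 := (Real.exp_pos _).ne'
  have E3 : Real.exp (γ3 * b) ≠ 0 := (Real.exp_pos _).ne'
  have n1 : γ1 - η ≠ 0 := by linarith
  have n2 : γ2 - η ≠ 0 := by linarith
  have n3 : γ3 + η ≠ 0 := by linarith
  have n4 : γ2 - γ1 ≠ 0 := by linarith
  have n5 : γ1 + γ3 ≠ 0 := by linarith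
  have n6 : γ2 + γ3 ≠ 0 := by linarith
  have nγ1 : γ1 ≠ 0 := ne_of_gt h1
  have nγ2 : γ2 ≠ 0 := by linarith
  have nγ3 : γ3 ≠ 0 := ne_of_gt h4
  refine ⟨?_, ?_, ?_, ?_⟩
  · rw [hB1 b]
    exact mul_pos (div_pos (Real.exp_pos _) hη) P1
  · rw [hB2 b]
    exact mul_pos (div_pos (Real.exp_pos _) hη) P2
  · rw [hB3 b]
    have := mul_pos (div_pos (Real.exp_pos (γ3 * b)) hη) P3
    linarith
  · intro x y z
    constructor
    · rintro ⟨hA0, hB0, hC0⟩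
      obtain ⟨hU, hV, hW⟩ := aux_solve η γ1 γ2 γ3
        (x * Real.exp (γ1 * b)) (y * Real.exp (γ2 * b)) (z * Real.exp (-γ3 * b))
        h1 h2 h3 h4 (by linear_combination hA0) (by linear_combination hB0)
        (by linear_combination hC0)
      rw [ee3] at hW
      refine ⟨?_, ?_, ?_⟩
      · rw [hB1 b, ee1]
        field_simp at hU ⊢
        linear_combination hU
      · rw [hB2 b, ee2]
        field_simp at hV ⊢
        linear_combination hV
      · rw [hB3 b]
        field_simp at hW ⊢
        linear_combination hW
    · rintro ⟨hx, hy, hz⟩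
      subst hx hy hz
      rw [hB1 b, hB2 b, hB3 b, ee1, ee2, ee3]
      refine ⟨?_, ?_, ?_⟩
      · field_simp
        ring
      · field_simp
        ring
      · field_simp
        ring
end

section
/- Define Q(b) = B1(b) + B2(b) + B3(b) for b ∈ ℝ. Then Q is strictly decreasing on ℝ, Q(b) → −∞ as b → ∞, Q(0) > 0 if and only if −γ1γ2γ3 + η(−γ1γ2 + γ2γ3 + γ3γ1) > 0, and consequently there exists a unique b > 0 with Q(b) = 0 if and only if −γ1γ2γ3 + η(−γ1γ2 + γ2γ3 + γ3γ1) > 0. -/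
/-!
Each of the three terms is a multiple of an exponential: `B1` and `B2` are positive multiples of
decaying exponentials, hence antitone, while `B3` is a negative multiple of a growing exponential,
hence strictly antitone and tending to `-∞`. So `Q` is continuous, strictly decreasing and tends
to `-∞`, and by the intermediate value theorem it has a (necessarily unique) zero on `(0, ∞)`
exactly when `Q 0 > 0`.
-/

open Real Filter Set

theorem StrictAnti.existsUnique_gt_and_eq_iff {α δ : Type*} [ConditionallyCompleteLinearOrder α]
    [TopologicalSpace α] [OrderTopology α] [DenselyOrdered α] [LinearOrder δ] [TopologicalSpace δ]
    [OrderClosedTopology δ] {f : α → δ} {a : α} {y : δ} (hanti : StrictAnti f)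
    (hcont : ContinuousOn f (Ici a)) (htend : Tendsto f atTop atBot) :
    (∃! b, a < b ∧ f b = y) ↔ y < f a := by
  constructor
  · rintro ⟨b, ⟨hab, rfl⟩, -⟩
    exact hanti hab
  · intro hy
    obtain ⟨b, hab, rfl⟩ := intermediate_value_Ioi' hcont htend hy
    exact ⟨b, ⟨hab, rfl⟩, fun c hc => hanti.injective hc.2⟩

theorem Antitone.add_tendsto_atBot {α G : Type*} [Preorder α] [Nonempty α] [AddCommGroup G]
    [PartialOrder G] [IsOrderedAddMonoid G] {g h : α → G} (hg : Antitone g)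
    (hh : Tendsto h atTop atBot) : Tendsto (g + h) atTop atBot := by
  obtain ⟨a⟩ := ‹Nonempty α›
  exact tendsto_atBot_add_left_of_ge' _ (g a) ((eventually_ge_atTop a).mono fun _ hx => hg hx) hh

theorem antitone_exp_mul_mul {γ c : ℝ} (hγ : γ ≤ 0) (hc : 0 ≤ c) :
    Antitone fun b => exp (γ * b) * c :=
  fun _ _ hxy => mul_le_mul_of_nonneg_right (exp_le_exp.2 (mul_le_mul_of_nonpos_left hxy hγ)) hc

theorem strictAnti_exp_mul_mul {γ c : ℝ} (hγ : 0 < γ) (hc : c < 0) :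
    StrictAnti fun b => exp (γ * b) * c :=
  fun _ _ hxy => mul_lt_mul_of_neg_right (exp_lt_exp.2 (mul_lt_mul_of_pos_left hxy hγ)) hc

theorem tendsto_exp_mul_mul_atBot {γ c : ℝ} (hγ : 0 < γ) (hc : c < 0) :
    Tendsto (fun b => exp (γ * b) * c) atTop atBot :=
  (tendsto_exp_atTop.comp (tendsto_id.const_mul_atTop hγ)).atTop_mul_const_of_neg hc

/-- `Q = B1 + B2 + B3` is strictly decreasing, tends to `-∞` at `+∞`,
`Q(0) > 0` iff `-γ1γ2γ3 + η(-γ1γ2 + γ2γ3 + γ3γ1) > 0`, and there is a unique `b > 0` with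
`Q(b) = 0` iff `-γ1γ2γ3 + η(-γ1γ2 + γ2γ3 + γ3γ1) > 0`. -/
theorem stmt_14 (η γ1 γ2 γ3 : ℝ)
    (h1 : 0 < γ1) (h2 : γ1 < η) (h3 : η < γ2) (h4 : 0 < γ3)
    (B1 B2 B3 : ℝ → ℝ)
    (hB1 : ∀ b : ℝ, B1 b = Real.exp (-γ1 * b) / η *
      (γ2 * γ3 * (η - γ1) / (γ1 * (γ2 - γ1) * (γ1 + γ3))))
    (hB2 : ∀ b : ℝ, B2 b = Real.exp (-γ2 * b) / η *
      (γ3 * γ1 * (γ2 - η) / (γ2 * (γ2 + γ3) * (γ2 - γ1))))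
    (hB3 : ∀ b : ℝ, B3 b = -(Real.exp (γ3 * b) / η *
      (γ1 * γ2 * (η + γ3) / (γ3 * (γ1 + γ3) * (γ2 + γ3)))))
    (Q : ℝ → ℝ) (hQ : ∀ b : ℝ, Q b = B1 b + B2 b + B3 b) :
    StrictAnti Q ∧
    Filter.Tendsto Q Filter.atTop Filter.atBot ∧
    (0 < Q 0 ↔ 0 < -(γ1 * γ2 * γ3) + η * (-(γ1 * γ2) + γ2 * γ3 + γ3 * γ1)) ∧
    ((∃! b : ℝ, 0 < b ∧ Q b = 0) ↔
      0 < -(γ1 * γ2 * γ3) + η * (-(γ1 * γ2) + γ2 * γ3 + γ3 * γ1)) := by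
  have hη : 0 < η := h1.trans h2
  have hγ2 : 0 < γ2 := hη.trans h3
  have hη1 : 0 < η - γ1 := sub_pos.2 h2
  have h2η : 0 < γ2 - η := sub_pos.2 h3
  have h21 : 0 < γ2 - γ1 := sub_pos.2 (h2.trans h3)
  have hB1' : B1 = fun b => exp (-γ1 * b) * B1 0 := funext fun b => by
    simp only [hB1, mul_zero, exp_zero]; ring
  have hB2' : B2 = fun b => exp (-γ2 * b) * B2 0 := funext fun b => by
    simp only [hB2, mul_zero, exp_zero]; ring
  have hB3' : B3 = fun b => exp (γ3 * b) * B3 0 := funext fun b => by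
    simp only [hB3, mul_zero, exp_zero]; ring
  have hB1_pos : 0 < B1 0 := by rw [hB1]; positivity
  have hB2_pos : 0 < B2 0 := by rw [hB2]; positivity
  have hB3_neg : B3 0 < 0 := by rw [hB3, neg_lt_zero]; positivity
  have hQ' : Q = B1 + B2 + B3 := funext hQ
  have hB12 : Antitone (B1 + B2) := by
    rw [hB1', hB2']
    exact (antitone_exp_mul_mul (by linarith) hB1_pos.le).add
      (antitone_exp_mul_mul (by linarith) hB2_pos.le)
  have hanti : StrictAnti Q := hQ' ▸ hB3' ▸ hB12.add_strictAnti (strictAnti_exp_mul_mul h4 hB3_neg)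
  have htend : Tendsto Q atTop atBot :=
    hQ' ▸ hB3' ▸ hB12.add_tendsto_atBot (tendsto_exp_mul_mul_atBot h4 hB3_neg)
  have hcont : Continuous Q := by rw [hQ', hB1', hB2', hB3']; fun_prop
  have hQ0 : Q 0 = (-(γ1 * γ2 * γ3) + η * (-(γ1 * γ2) + γ2 * γ3 + γ3 * γ1)) /
      (η * γ1 * γ2 * γ3) := by
    simp only [hQ, hB1, hB2, hB3, mul_zero, exp_zero]
    field_simp
    ring
  have hQ0_pos : 0 < Q 0 ↔ 0 < -(γ1 * γ2 * γ3) + η * (-(γ1 * γ2) + γ2 * γ3 + γ3 * γ1) := by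
    rw [hQ0, div_pos_iff_of_pos_right (by positivity)]
  exact ⟨hanti, htend, hQ0_pos,
    (hanti.existsUnique_gt_and_eq_iff hcont.continuousOn htend).trans hQ0_pos⟩
end

section
/- Let γ1, γ2, γ3 be real numbers with 0 < γ1 < η < γ2 and γ3 > 0 satisfying G(γ1) = G(γ2) = G(−γ3) = α. Then there exists a unique quadruple (B1, B2, B3, b) ∈ ℝ³ × (0, ∞) satisfying: (i) (B1 η/(γ1−η)) e^{γ1 b} + (B2 η/(γ2−η)) e^{γ2 b} − (B3 η/(γ3+η)) e^{−γ3 b} + B1 e^{γ1 b} + B2 e^{γ2 b} + B3 e^{−γ3 b} + 1/η = 0; (ii) γ1 B1 e^{γ1 b} + γ2 B2 e^{γ2 b} − γ3 B3 e^{−γ3 b} = 1; (iii) γ1² B1 e^{γ1 b} + γ2² B2 e^{γ2 b} + γ3² B3 e^{−γ3 b} = 0; (iv) B1 + B2 + B3 = 0, if and only if μ + λ/η > 0. Moreover, when a solution exists it satisfies B1 > 0, B2 > 0 and B3 < 0. -/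
/-!
Equations (i)–(iii) form a linear system in `B₁ e^{γ₁ b}, B₂ e^{γ₂ b}, B₃ e^{-γ₃ b}` with a unique
solution `(D₁, D₂, D₃)`, independent of `b`, and `D₁, D₂ > 0 > D₃`. Equation (iv) then reads
`F b = 0` for `F b = D₁ e^{-γ₁ b} + D₂ e^{-γ₂ b} + D₃ e^{γ₃ b}`, which is strictly decreasing and
tends to `-∞`; so a positive root exists, and is then unique, iff
`F 0 = 1/γ₁ + 1/γ₂ - 1/γ₃ - 1/η > 0`. Finally `γ₁, γ₂, -γ₃` are the three roots of the cubic
`(η - γ)(G γ - α) = 0`, and Vieta's formulas give `μ + λ/η = α F(0)`.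
-/

/-- The system of equations (i)-(iv) for the harvesting problem. -/
def harvSys (η γ1 γ2 γ3 B1 B2 B3 b : ℝ) : Prop :=
  B1 * η / (γ1 - η) * Real.exp (γ1 * b) + B2 * η / (γ2 - η) * Real.exp (γ2 * b)
      - B3 * η / (γ3 + η) * Real.exp (-γ3 * b)
      + B1 * Real.exp (γ1 * b) + B2 * Real.exp (γ2 * b) + B3 * Real.exp (-γ3 * b)
      + 1 / η = 0 ∧
  γ1 * B1 * Real.exp (γ1 * b) + γ2 * B2 * Real.exp (γ2 * b)
      - γ3 * B3 * Real.exp (-γ3 * b) = 1 ∧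
  γ1 ^ 2 * B1 * Real.exp (γ1 * b) + γ2 ^ 2 * B2 * Real.exp (γ2 * b)
      + γ3 ^ 2 * B3 * Real.exp (-γ3 * b) = 0 ∧
  B1 + B2 + B3 = 0

open Real Filter Topology

theorem cubic_coeffs_of_three_roots {R : Type*} [CommRing R] [IsDomain R] {a b c d x y z : R}
    (hxy : x ≠ y) (hxz : x ≠ z) (hyz : y ≠ z) (hx : a * x ^ 3 + b * x ^ 2 + c * x + d = 0)
    (hy : a * y ^ 3 + b * y ^ 2 + c * y + d = 0) (hz : a * z ^ 3 + b * z ^ 2 + c * z + d = 0) :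
    b = -a * (x + y + z) ∧ c = a * (x * y + x * z + y * z) ∧ d = -a * (x * y * z) := by
  have hxy' : a * (x ^ 2 + x * y + y ^ 2) + b * (x + y) + c = 0 :=
    mul_left_cancel₀ (sub_ne_zero.2 hxy) (by linear_combination hx - hy)
  have hxz' : a * (x ^ 2 + x * z + z ^ 2) + b * (x + z) + c = 0 :=
    mul_left_cancel₀ (sub_ne_zero.2 hxz) (by linear_combination hx - hz)
  have hb : b = -a * (x + y + z) :=
    mul_left_cancel₀ (sub_ne_zero.2 hyz) (by linear_combination hxy' - hxz')
  have hc : c = a * (x * y + x * z + y * z) := by linear_combination hxy' - (x + y) * hb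
  exact ⟨hb, hc, by linear_combination hx - x ^ 2 * hb - x * hc⟩

theorem cubic_eq_zero_of_lundberg {σ μ lam η α r : ℝ} (hr : r ≠ η)
    (h : 1 / 2 * σ ^ 2 * r ^ 2 + μ * r + lam * η / (η - r) - lam = α) :
    -(σ ^ 2 / 2) * r ^ 3 + (σ ^ 2 * η / 2 - μ) * r ^ 2 + (μ * η + lam + α) * r + -(α * η) = 0 := by
  field_simp [sub_ne_zero.2 hr.symm] at h
  linear_combination h / 2

theorem mu_add_lam_div_eq {σ μ lam η α γ1 γ2 γ3 : ℝ} (h1 : 0 < γ1) (h2 : γ1 < η)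
    (h3 : η < γ2) (h4 : 0 < γ3)
    (e1 : 1 / 2 * σ ^ 2 * γ1 ^ 2 + μ * γ1 + lam * η / (η - γ1) - lam = α)
    (e2 : 1 / 2 * σ ^ 2 * γ2 ^ 2 + μ * γ2 + lam * η / (η - γ2) - lam = α)
    (e3 : 1 / 2 * σ ^ 2 * (-γ3) ^ 2 + μ * (-γ3) + lam * η / (η - -γ3) - lam = α) :
    μ + lam / η = α * (1 / γ1 + 1 / γ2 - 1 / γ3 - 1 / η) := by
  obtain ⟨-, hc, hd⟩ := cubic_coeffs_of_three_roots (by linarith) (by linarith) (by linarith)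
    (cubic_eq_zero_of_lundberg h2.ne e1) (cubic_eq_zero_of_lundberg h3.ne' e2)
    (cubic_eq_zero_of_lundberg (by linarith) e3)
  have hη : 0 < η := by linarith
  have hγ2 : 0 < γ2 := by linarith
  field_simp
  linear_combination γ1 * γ2 * γ3 * hc - (γ1 * γ2 - γ1 * γ3 - γ2 * γ3) * hd

def harvLinear (η γ1 γ2 γ3 u1 u2 u3 : ℝ) : Prop :=
  u1 * η / (γ1 - η) + u2 * η / (γ2 - η) - u3 * η / (γ3 + η) + u1 + u2 + u3 + 1 / η = 0 ∧
  γ1 * u1 + γ2 * u2 - γ3 * u3 = 1 ∧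
  γ1 ^ 2 * u1 + γ2 ^ 2 * u2 + γ3 ^ 2 * u3 = 0

noncomputable def harvCoeff₁ (η γ1 γ2 γ3 : ℝ) : ℝ :=
  γ2 * γ3 * (η - γ1) / (η * γ1 * (γ2 - γ1) * (γ1 + γ3))

noncomputable def harvCoeff₂ (η γ1 γ2 γ3 : ℝ) : ℝ :=
  γ1 * γ3 * (γ2 - η) / (η * γ2 * (γ2 - γ1) * (γ2 + γ3))

noncomputable def harvCoeff₃ (η γ1 γ2 γ3 : ℝ) : ℝ :=
  -(γ1 * γ2) * (γ3 + η) / (η * γ3 * (γ1 + γ3) * (γ2 + γ3))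

noncomputable def harvFun (η γ1 γ2 γ3 b : ℝ) : ℝ :=
  harvCoeff₁ η γ1 γ2 γ3 * exp (-(γ1 * b)) + harvCoeff₂ η γ1 γ2 γ3 * exp (-(γ2 * b))
    + harvCoeff₃ η γ1 γ2 γ3 * exp (γ3 * b)

section

variable {η γ1 γ2 γ3 : ℝ}

theorem harvSys_iff_harvLinear {B1 B2 B3 b : ℝ} :
    harvSys η γ1 γ2 γ3 B1 B2 B3 b ↔
      harvLinear η γ1 γ2 γ3 (B1 * exp (γ1 * b)) (B2 * exp (γ2 * b)) (B3 * exp (-γ3 * b)) ∧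
        B1 + B2 + B3 = 0 := by
  simp only [harvSys, harvLinear, and_assoc]
  ring_nf

theorem harvLinear_iff (h1 : 0 < γ1) (h2 : γ1 < η) (h3 : η < γ2) (h4 : 0 < γ3) {u1 u2 u3 : ℝ} :
    harvLinear η γ1 γ2 γ3 u1 u2 u3 ↔
      u1 = harvCoeff₁ η γ1 γ2 γ3 ∧ u2 = harvCoeff₂ η γ1 γ2 γ3 ∧ u3 = harvCoeff₃ η γ1 γ2 γ3 := by
  have hη : 0 < η := by linarith
  have hγ2 : 0 < γ2 := by linarith
  have h12 : 0 < γ2 - γ1 := by linarith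
  have h1η : γ1 - η ≠ 0 := by linarith
  have h2η : γ2 - η ≠ 0 := by linarith
  constructor
  · rintro ⟨hi, hii, hiii⟩
    have hi' : η * (γ1 * (γ2 - η) * (γ3 + η) * u1 + γ2 * (γ1 - η) * (γ3 + η) * u2
        + γ3 * (γ1 - η) * (γ2 - η) * u3) = -((γ1 - η) * (γ2 - η) * (γ3 + η)) := by
      field_simp at hi
      linear_combination hi
    /- With `r = γ1, γ2, -γ3` and `vᵣ = r uᵣ`, (ii), (iii), (i) read `∑ vᵣ = 1`, `∑ r vᵣ = 0`,
      `∑ vᵣ / (r - η) = -1/η`. The weights `η - r' - r''`, `1`, `(η - r')(η - r'')` give `vᵣ`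
      the coefficient `(r - r')(r - r'') / (r - η)`, which vanishes at `r'` and `r''`. -/
    refine ⟨?_, ?_, ?_⟩
    · rw [harvCoeff₁, eq_div_iff (by positivity)]
      linear_combination -η * (γ1 - η) * (η - γ2 + γ3) * hii - η * (γ1 - η) * hiii + hi'
    · rw [harvCoeff₂, eq_div_iff (by positivity)]
      linear_combination η * (γ2 - η) * (η - γ1 + γ3) * hii + η * (γ2 - η) * hiii - hi'
    · rw [harvCoeff₃, eq_div_iff (by positivity)]
      linear_combination η * (γ3 + η) * (η - γ1 - γ2) * hii + η * (γ3 + η) * hiii + hi'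
  · rintro ⟨rfl, rfl, rfl⟩
    refine ⟨?_, ?_, ?_⟩ <;>
    · simp only [harvCoeff₁, harvCoeff₂, harvCoeff₃]
      field_simp
      ring

theorem harvCoeff₁_pos (h1 : 0 < γ1) (h2 : γ1 < η) (h3 : η < γ2) (h4 : 0 < γ3) :
    0 < harvCoeff₁ η γ1 γ2 γ3 := by
  have : 0 < η := by linarith
  have : 0 < γ2 := by linarith
  have : 0 < γ2 - γ1 := by linarith
  unfold harvCoeff₁
  positivity

theorem harvCoeff₂_pos (h1 : 0 < γ1) (h2 : γ1 < η) (h3 : η < γ2) (h4 : 0 < γ3) :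
    0 < harvCoeff₂ η γ1 γ2 γ3 := by
  have : 0 < η := by linarith
  have : 0 < γ2 := by linarith
  have : 0 < γ2 - γ1 := by linarith
  unfold harvCoeff₂
  positivity

theorem harvCoeff₃_neg (h1 : 0 < γ1) (h2 : γ1 < η) (h3 : η < γ2) (h4 : 0 < γ3) :
    harvCoeff₃ η γ1 γ2 γ3 < 0 := by
  have : 0 < η := by linarith
  have : 0 < γ2 := by linarith
  unfold harvCoeff₃
  apply div_neg_of_neg_of_pos
  · rw [neg_mul, neg_lt_zero]
    positivity
  · positivity

theorem harvFun_zero (h1 : 0 < γ1) (h2 : γ1 < η) (h3 : η < γ2) (h4 : 0 < γ3) :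
    harvFun η γ1 γ2 γ3 0 = 1 / γ1 + 1 / γ2 - 1 / γ3 - 1 / η := by
  have : 0 < η := by linarith
  have : 0 < γ2 := by linarith
  have : γ2 - γ1 ≠ 0 := by linarith
  simp only [harvFun, harvCoeff₁, harvCoeff₂, harvCoeff₃, mul_zero, neg_zero, exp_zero, mul_one]
  field_simp
  ring

theorem harvFun_strictAnti (h1 : 0 < γ1) (h2 : γ1 < η) (h3 : η < γ2) (h4 : 0 < γ3) :
    StrictAnti (harvFun η γ1 γ2 γ3) := by
  have hexp {γ : ℝ} (hγ : 0 < γ) : StrictAnti fun b => exp (-(γ * b)) :=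
    exp_strictMono.comp_strictAnti fun _ _ h => neg_lt_neg (mul_lt_mul_of_pos_left h hγ)
  exact (((hexp h1).const_mul (harvCoeff₁_pos h1 h2 h3 h4)).add
    ((hexp (γ := γ2) (by linarith)).const_mul (harvCoeff₂_pos h1 h2 h3 h4))).add
    ((exp_strictMono.comp (strictMono_mul_left_of_pos h4)).const_mul_of_neg
      (harvCoeff₃_neg h1 h2 h3 h4))

theorem tendsto_harvFun_atBot (h1 : 0 < γ1) (h2 : γ1 < η) (h3 : η < γ2) (h4 : 0 < γ3) :
    Tendsto (harvFun η γ1 γ2 γ3) atTop atBot := by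
  have hexp {γ : ℝ} (hγ : 0 < γ) : Tendsto (fun b => exp (-(γ * b))) atTop (𝓝 0) :=
    tendsto_exp_neg_atTop_nhds_zero.comp (tendsto_id.const_mul_atTop hγ)
  have := ((hexp h1).const_mul (harvCoeff₁ η γ1 γ2 γ3)).add
    ((hexp (γ := γ2) (by linarith)).const_mul (harvCoeff₂ η γ1 γ2 γ3))
  rw [mul_zero, mul_zero, add_zero] at this
  exact this.add_atBot <| Tendsto.const_mul_atTop_of_neg (harvCoeff₃_neg h1 h2 h3 h4)
    (tendsto_exp_atTop.comp (tendsto_id.const_mul_atTop h4))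

theorem harvSys_iff (h1 : 0 < γ1) (h2 : γ1 < η) (h3 : η < γ2) (h4 : 0 < γ3) {B1 B2 B3 b : ℝ} :
    harvSys η γ1 γ2 γ3 B1 B2 B3 b ↔
      B1 = harvCoeff₁ η γ1 γ2 γ3 * exp (-(γ1 * b)) ∧ B2 = harvCoeff₂ η γ1 γ2 γ3 * exp (-(γ2 * b)) ∧
        B3 = harvCoeff₃ η γ1 γ2 γ3 * exp (γ3 * b) ∧ harvFun η γ1 γ2 γ3 b = 0 := by
  have mul_exp_eq_iff {B x D : ℝ} : B * exp x = D ↔ B = D * exp (-x) := by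
    rw [exp_neg, ← div_eq_mul_inv, eq_div_iff (exp_pos x).ne']
  rw [harvSys_iff_harvLinear, harvLinear_iff h1 h2 h3 h4, mul_exp_eq_iff, mul_exp_eq_iff,
    mul_exp_eq_iff, neg_mul, neg_neg, and_assoc, and_assoc]
  constructor <;> rintro ⟨rfl, rfl, rfl, h⟩ <;> exact ⟨rfl, rfl, rfl, h⟩

theorem existsUnique_harvSys_iff (h1 : 0 < γ1) (h2 : γ1 < η) (h3 : η < γ2) (h4 : 0 < γ3) :
    (∃! q : ℝ × ℝ × ℝ × ℝ, 0 < q.2.2.2 ∧ harvSys η γ1 γ2 γ3 q.1 q.2.1 q.2.2.1 q.2.2.2) ↔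
      0 < harvFun η γ1 γ2 γ3 0 := by
  have hanti := harvFun_strictAnti h1 h2 h3 h4
  constructor
  · rintro ⟨⟨B1, B2, B3, b⟩, ⟨hb, hs⟩, -⟩
    obtain ⟨-, -, -, hb0⟩ := (harvSys_iff h1 h2 h3 h4).1 hs
    exact hb0.symm.trans_lt (hanti hb)
  · intro h0
    have hcont : Continuous (harvFun η γ1 γ2 γ3) := by unfold harvFun; fun_prop
    obtain ⟨b, hb, hb0⟩ := intermediate_value_Ioi' hcont.continuousOn
      (tendsto_harvFun_atBot h1 h2 h3 h4) h0
    refine ⟨(harvCoeff₁ η γ1 γ2 γ3 * exp (-(γ1 * b)), harvCoeff₂ η γ1 γ2 γ3 * exp (-(γ2 * b)),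
      harvCoeff₃ η γ1 γ2 γ3 * exp (γ3 * b), b),
      ⟨hb, (harvSys_iff h1 h2 h3 h4).2 ⟨rfl, rfl, rfl, hb0⟩⟩, ?_⟩
    rintro ⟨B1, B2, B3, b'⟩ ⟨-, hs : harvSys η γ1 γ2 γ3 B1 B2 B3 b'⟩
    obtain ⟨rfl, rfl, rfl, hb'0⟩ := (harvSys_iff h1 h2 h3 h4).1 hs
    obtain rfl := hanti.injective (hb'0.trans hb0.symm)
    rfl

theorem pos_and_pos_and_neg_of_harvSys (h1 : 0 < γ1) (h2 : γ1 < η) (h3 : η < γ2) (h4 : 0 < γ3)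
    {B1 B2 B3 b : ℝ} (hs : harvSys η γ1 γ2 γ3 B1 B2 B3 b) : 0 < B1 ∧ 0 < B2 ∧ B3 < 0 := by
  obtain ⟨rfl, rfl, rfl, -⟩ := (harvSys_iff h1 h2 h3 h4).1 hs
  exact ⟨mul_pos (harvCoeff₁_pos h1 h2 h3 h4) (exp_pos _),
    mul_pos (harvCoeff₂_pos h1 h2 h3 h4) (exp_pos _),
    mul_neg_of_neg_of_pos (harvCoeff₃_neg h1 h2 h3 h4) (exp_pos _)⟩

end

theorem stmt_15_general (σ μ lam η α : ℝ) (hα : 0 < α)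
    (G : ℝ → ℝ)
    (hG : ∀ γ : ℝ, γ ≠ η → G γ = 1 / 2 * σ ^ 2 * γ ^ 2 + μ * γ + lam * η / (η - γ) - lam)
    (γ1 γ2 γ3 : ℝ) (h1 : 0 < γ1) (h2 : γ1 < η) (h3 : η < γ2) (h4 : 0 < γ3)
    (e1 : G γ1 = α) (e2 : G γ2 = α) (e3 : G (-γ3) = α) :
    ((∃! q : ℝ × ℝ × ℝ × ℝ, 0 < q.2.2.2 ∧ harvSys η γ1 γ2 γ3 q.1 q.2.1 q.2.2.1 q.2.2.2) ↔
      0 < μ + lam / η) ∧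
    ∀ B1 B2 B3 b : ℝ, 0 < b → harvSys η γ1 γ2 γ3 B1 B2 B3 b →
      0 < B1 ∧ 0 < B2 ∧ B3 < 0 := by
  have hμ : μ + lam / η = α * (1 / γ1 + 1 / γ2 - 1 / γ3 - 1 / η) :=
    mu_add_lam_div_eq h1 h2 h3 h4 ((hG γ1 h2.ne).symm.trans e1) ((hG γ2 h3.ne').symm.trans e2)
      ((hG (-γ3) (by linarith)).symm.trans e3)
  refine ⟨?_, fun B1 B2 B3 b _ hs => pos_and_pos_and_neg_of_harvSys h1 h2 h3 h4 hs⟩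
  rw [existsUnique_harvSys_iff h1 h2 h3 h4, harvFun_zero h1 h2 h3 h4, hμ,
    mul_pos_iff_of_pos_left hα]

/-- There exists a unique quadruple `(B1, B2, B3, b) ∈ ℝ³ × (0, ∞)` solving
(i)-(iv) if and only if `μ + λ/η > 0`; moreover any solution satisfies `B1 > 0`, `B2 > 0`,
`B3 < 0`. -/
theorem stmt_15 (σ μ lam η α : ℝ) (hσ : 0 < σ) (hlam : 0 < lam) (hη : 0 < η) (hα : 0 < α)
    (G : ℝ → ℝ)
    (hG : ∀ γ : ℝ, γ ≠ η → G γ = 1 / 2 * σ ^ 2 * γ ^ 2 + μ * γ + lam * η / (η - γ) - lam)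
    (γ1 γ2 γ3 : ℝ) (h1 : 0 < γ1) (h2 : γ1 < η) (h3 : η < γ2) (h4 : 0 < γ3)
    (e1 : G γ1 = α) (e2 : G γ2 = α) (e3 : G (-γ3) = α) :
    ((∃! q : ℝ × ℝ × ℝ × ℝ, 0 < q.2.2.2 ∧ harvSys η γ1 γ2 γ3 q.1 q.2.1 q.2.2.1 q.2.2.2) ↔
      0 < μ + lam / η) ∧
    ∀ B1 B2 B3 b : ℝ, 0 < b → harvSys η γ1 γ2 γ3 B1 B2 B3 b →
      0 < B1 ∧ 0 < B2 ∧ B3 < 0 :=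
  stmt_15_general σ μ lam η α hα G hG γ1 γ2 γ3 h1 h2 h3 h4 e1 e2 e3
end
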